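/- arXiv:2209.14358 — 3 statements merged into one kernel-verified Lean document; each statement's English description precedes it below -/
import Mathlib

section
/- Let M be an MPS tensor with physical dimension d and bond dimension D. The following are equivalent: (i) M is in minimal canonical form, i.e. ‖M‖ = inf{‖S‖ : S ∈ closure(GL(D,ℂ)·M)}; (ii) ‖g·M‖ ≥ ‖M‖ for every g ∈ GL(D,ℂ); (iii) ∑_{i=1}^d M^(i)(M^(i))† = ∑_{i=1}^d (M^(i))† M^(i). -/
/-!
STATEMENT 0 (Characterization of the minimal canonical form for MPS).

Let `M` be an MPS tensor with physical dimension `d` and bond dimension `D`.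
The following are equivalent:
(i)   `M` is in minimal canonical form, i.e. `‖M‖ = inf {‖S‖ : S ∈ closure (GL(D,ℂ)·M)}`;
(ii)  `‖g·M‖ ≥ ‖M‖` for every `g ∈ GL(D,ℂ)`;
(iii) `∑ i, M i * (M i)ᴴ = ∑ i, (M i)ᴴ * M i`.
-/

open scoped BigOperators
open Matrix

noncomputable section

namespace MPS

/-- An MPS tensor: a `d`-tuple of complex `D × D` matrices. -/
abbrev MPSTensor (d D : ℕ) : Type := Fin d → Matrix (Fin D) (Fin D) ℂ

variable {d D : ℕ}

/-- The gauge action of `GL(D, ℂ)` by simultaneous conjugation. -/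
def mact (g : GL (Fin D) ℂ) (M : MPSTensor d D) : MPSTensor d D :=
  fun i => (g : Matrix (Fin D) (Fin D) ℂ) * M i *
    ((g⁻¹ : GL (Fin D) ℂ) : Matrix (Fin D) (Fin D) ℂ)

/-- The gauge orbit of an MPS tensor. -/
def orbit (M : MPSTensor d D) : Set (MPSTensor d D) :=
  { S | ∃ g : GL (Fin D) ℂ, S = mact g M }

/-- The square of the Frobenius (ℓ²) norm of an MPS tensor. -/
def mnormSq (M : MPSTensor d D) : ℝ := ∑ i, ∑ a, ∑ b, ‖M i a b‖ ^ 2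

/-- The Frobenius (ℓ²) norm of an MPS tensor. -/
def mnorm (M : MPSTensor d D) : ℝ := Real.sqrt (mnormSq M)

end MPS

/-!
The squared norm `‖g·M‖²` depends only on `gᴴ g`. Diagonalising `gᴴ g = V diag(p) Vᴴ` and using that
unitary conjugation preserves both the norm and condition (iii), it suffices to consider diagonal
gauges `x`, for which `‖x·M‖² = ∑_{a,b} (|x_a| / |x_b|)² c_{ab}` with `c_{ab} = ∑_i |M^(i)_{ab}|²`.
The diagonal entries of `∑ M Mᴴ - ∑ Mᴴ M` are the row sums minus the column sums of `c`.
If they vanish, `r ≥ 1 + log r` gives `‖x·M‖² ≥ ∑_{a,b} c_{ab} = ‖M‖²`. Conversely, in an eigenbasis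
where `∑ M Mᴴ - ∑ Mᴴ M = diag(μ)`, the norm along the gauge path `x_a = exp(-t μ_a)` has derivative
`-2 ∑_a μ_a²` at `t = 0`, so minimality forces `μ = 0`. Finally, (i) ⇔ (ii) since the norm is
continuous, so it is bounded below by `‖M‖` on the orbit closure as soon as it is on the orbit.
-/

namespace Matrix

lemma sum_sum_norm_sq_eq_re_trace {m n : Type*} [Fintype m] [Fintype n] (X : Matrix m n ℂ) :
    ∑ a, ∑ b, ‖X a b‖ ^ 2 = (trace (Xᴴ * X)).re := by
  simp only [trace, diag, mul_apply, conjTranspose_apply, Complex.re_sum, RCLike.star_def,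
    Complex.conj_mul', ← Complex.ofReal_pow, Complex.ofReal_re]
  exact Finset.sum_comm

lemma trace_conjTranspose_mul_self_mul_mul {n : Type*} [Fintype n] (G X H : Matrix n n ℂ) :
    trace ((G * X * H)ᴴ * (G * X * H)) = trace (Xᴴ * (Gᴴ * G) * X * (H * Hᴴ)) := by
  simp only [conjTranspose_mul, Matrix.mul_assoc]
  rw [trace_mul_comm]
  simp only [Matrix.mul_assoc]

lemma coe_inv_mul_conjTranspose_coe_inv {n : Type*} [Fintype n] [DecidableEq n] (g : GL n ℂ) :
    (g⁻¹ : GL n ℂ).val * (g⁻¹ : GL n ℂ).valᴴ = (g.valᴴ * g.val)⁻¹ := by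
  refine (inv_eq_left_inv ?_).symm
  calc _ = (g⁻¹ : GL n ℂ).val * (g.val * (g⁻¹ : GL n ℂ).val)ᴴ * g.val := by
        simp only [conjTranspose_mul, Matrix.mul_assoc]
    _ = 1 := by simp

def diagonalGL {n R : Type*} [Fintype n] [DecidableEq n] [CommRing R] (x : n → Rˣ) : GL n R :=
  ⟨diagonal fun a => x a, diagonal fun a => ((x a)⁻¹ : Rˣ), by simp, by simp⟩

@[simp] lemma coe_diagonalGL {n R : Type*} [Fintype n] [DecidableEq n] [CommRing R]
    (x : n → Rˣ) : (diagonalGL x : Matrix n n R) = diagonal fun a => (x a : R) := rfl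

@[simp] lemma coe_diagonalGL_inv {n R : Type*} [Fintype n] [DecidableEq n] [CommRing R]
    (x : n → Rˣ) :
    (((diagonalGL x)⁻¹ : GL n R) : Matrix n n R) = diagonal fun a => (((x a)⁻¹ : Rˣ) : R) := rfl

end Matrix

lemma Finset.sum_sum_sub_mul_eq {ι R : Type*} [Fintype ι] [CommRing R] (x : ι → R)
    (c : ι → ι → R) :
    ∑ a, ∑ b, (x a - x b) * c a b = ∑ a, x a * (∑ b, c a b - ∑ b, c b a) := by
  simp only [sub_mul, Finset.sum_sub_distrib, mul_sub, Finset.mul_sum]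
  rw [Finset.sum_comm (f := fun a b => x b * c a b)]

lemma eq_sInf_image_closure_iff {X : Type*} [TopologicalSpace X] {f : X → ℝ} (hf : Continuous f)
    (hbdd : BddBelow (Set.range f)) {s : Set X} {x : X} (hx : x ∈ s) :
    f x = sInf (f '' closure s) ↔ ∀ y ∈ s, f x ≤ f y := by
  have hbdd' : BddBelow (f '' closure s) := hbdd.mono (Set.image_subset_range f _)
  have hfx : f x ∈ f '' closure s := ⟨x, subset_closure hx, rfl⟩
  refine ⟨fun h y hy => h ▸ csInf_le hbdd' ⟨y, subset_closure hy, rfl⟩, fun h => ?_⟩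
  refine le_antisymm (le_csInf ⟨_, hfx⟩ ?_) (csInf_le hbdd' hfx)
  rintro _ ⟨y, hy, rfl⟩
  exact closure_minimal h (isClosed_le continuous_const hf) hy

namespace MPS

variable {d D : ℕ}

lemma mact_one (M : MPSTensor d D) : mact 1 M = M := by
  funext i
  simp [mact]

lemma mact_mul (g h : GL (Fin D) ℂ) (M : MPSTensor d D) :
    mact (g * h) M = mact g (mact h M) := by
  funext i
  simp [mact, Matrix.mul_assoc]

lemma mact_unitary_apply (u : unitaryGroup (Fin D) ℂ) (M : MPSTensor d D) (i : Fin d) :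
    mact (Unitary.toUnits u) M i = Unitary.conjStarAlgAut ℂ _ u (M i) := rfl

lemma mem_orbit_self (M : MPSTensor d D) : M ∈ orbit M := ⟨1, (mact_one M).symm⟩

lemma mnormSq_nonneg (M : MPSTensor d D) : 0 ≤ mnormSq M := by
  unfold mnormSq
  positivity

lemma mnorm_le_mnorm_iff {M N : MPSTensor d D} : mnorm M ≤ mnorm N ↔ mnormSq M ≤ mnormSq N :=
  Real.sqrt_le_sqrt_iff (mnormSq_nonneg N)

lemma continuous_mnorm : Continuous (mnorm : MPSTensor d D → ℝ) := by
  unfold mnorm mnormSq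
  fun_prop

lemma mnormSq_eq_sum_re_trace (M : MPSTensor d D) :
    mnormSq M = ∑ i, (trace ((M i)ᴴ * M i)).re := by
  simp only [mnormSq, sum_sum_norm_sq_eq_re_trace]

lemma mnormSq_mact_eq_of_conjTranspose_mul_self_eq {g h : GL (Fin D) ℂ}
    (hgh : g.valᴴ * g.val = h.valᴴ * h.val) (M : MPSTensor d D) :
    mnormSq (mact g M) = mnormSq (mact h M) := by
  simp only [mnormSq_eq_sum_re_trace, mact, trace_conjTranspose_mul_self_mul_mul,
    coe_inv_mul_conjTranspose_coe_inv, hgh]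

lemma mnormSq_mact_unitary (u : unitaryGroup (Fin D) ℂ) (M : MPSTensor d D) :
    mnormSq (mact (Unitary.toUnits u) M) = mnormSq M := by
  have hu : (Unitary.toUnits u).valᴴ * (Unitary.toUnits u).val = (1 : GL (Fin D) ℂ).valᴴ * 1 := by
    simp [← star_eq_conjTranspose]
  rw [mnormSq_mact_eq_of_conjTranspose_mul_self_eq hu, mact_one]

open scoped ComplexOrder in
lemma exists_conjTranspose_mul_self_eq_diagonalGL_mul_unitary (g : GL (Fin D) ℂ) :
    ∃ (x : Fin D → ℂˣ) (u : unitaryGroup (Fin D) ℂ),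
      g.valᴴ * g.val =
        (diagonalGL x * Unitary.toUnits u).valᴴ * (diagonalGL x * Unitary.toUnits u).val := by
  have hP : (g.valᴴ * g.val).PosDef :=
    .conjTranspose_mul_self _ (mulVec_injective_of_isUnit g.isUnit)
  set v := hP.isHermitian.eigenvectorUnitary
  set p := hP.isHermitian.eigenvalues
  have hsqrt : ∀ a, (Real.sqrt (p a) : ℂ) ≠ 0 := fun a => by
    exact_mod_cast (Real.sqrt_pos.mpr (hP.eigenvalues_pos a)).ne'
  set S : Matrix (Fin D) (Fin D) ℂ := diagonal fun a => (Real.sqrt (p a) : ℂ)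
  have hS : Sᴴ * S = diagonal (RCLike.ofReal ∘ p) := by
    rw [diagonal_conjTranspose, diagonal_mul_diagonal]
    congr 1
    funext a
    simpa [← Complex.ofReal_mul] using Real.mul_self_sqrt (hP.eigenvalues_pos a).le
  refine ⟨fun a => Units.mk0 _ (hsqrt a), star v, ?_⟩
  calc g.valᴴ * g.val = v.val * diagonal (RCLike.ofReal ∘ p) * star v.val :=
        hP.isHermitian.spectral_theorem
    _ = (S * star v.val)ᴴ * (S * star v.val) := by
        simp only [← hS, ← star_eq_conjTranspose, star_mul, star_star, Matrix.mul_assoc]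
    _ = _ := rfl

def entryWeight (M : MPSTensor d D) (a b : Fin D) : ℝ := ∑ i, ‖M i a b‖ ^ 2

lemma entryWeight_nonneg (M : MPSTensor d D) (a b : Fin D) : 0 ≤ entryWeight M a b :=
  Finset.sum_nonneg fun _ _ => sq_nonneg _

lemma mnormSq_eq_sum_entryWeight (M : MPSTensor d D) :
    mnormSq M = ∑ a, ∑ b, entryWeight M a b := by
  simp only [mnormSq, entryWeight]
  rw [Finset.sum_comm]
  exact Finset.sum_congr rfl fun _ _ => Finset.sum_comm

lemma mnormSq_mact_diagonalGL (x : Fin D → ℂˣ) (M : MPSTensor d D) :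
    mnormSq (mact (diagonalGL x) M) =
      ∑ a, ∑ b, (‖(x a : ℂ)‖ / ‖(x b : ℂ)‖) ^ 2 * entryWeight M a b := by
  simp only [mnormSq, entryWeight, Finset.mul_sum]
  rw [Finset.sum_comm]
  refine Finset.sum_congr rfl fun a _ => ?_
  rw [Finset.sum_comm]
  refine Finset.sum_congr rfl fun b _ => Finset.sum_congr rfl fun i _ => ?_
  simp only [mact, coe_diagonalGL, coe_diagonalGL_inv, diagonal_mul, mul_diagonal, norm_mul,
    Units.val_inv_eq_inv_val, norm_inv]
  ring

def gaugeDefect (M : MPSTensor d D) : Matrix (Fin D) (Fin D) ℂ :=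
  ∑ i, M i * (M i)ᴴ - ∑ i, (M i)ᴴ * M i

lemma re_gaugeDefect_apply_self (M : MPSTensor d D) (a : Fin D) :
    (gaugeDefect M a a).re = ∑ b, entryWeight M a b - ∑ b, entryWeight M b a := by
  simp only [gaugeDefect, entryWeight, Matrix.sub_apply, Complex.sub_re, Matrix.sum_apply,
    mul_apply, conjTranspose_apply, Complex.re_sum, RCLike.star_def, Complex.mul_conj',
    Complex.conj_mul', ← Complex.ofReal_pow, Complex.ofReal_re]
  rw [Finset.sum_comm, Finset.sum_comm (γ := Fin d) (s := Finset.univ) (t := Finset.univ)]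

lemma gaugeDefect_mact_unitary (u : unitaryGroup (Fin D) ℂ) (M : MPSTensor d D) :
    gaugeDefect (mact (Unitary.toUnits u) M) = Unitary.conjStarAlgAut ℂ _ u (gaugeDefect M) := by
  simp only [gaugeDefect, mact_unitary_apply, ← star_eq_conjTranspose, map_sub, map_sum, map_mul,
    map_star]

lemma mnormSq_le_mnormSq_mact_diagonalGL {M : MPSTensor d D} (hM : gaugeDefect M = 0)
    (x : Fin D → ℂˣ) : mnormSq M ≤ mnormSq (mact (diagonalGL x) M) := by
  set y : Fin D → ℝ := fun a => Real.log (‖(x a : ℂ)‖ ^ 2)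
  have hbalanced : ∀ a, ∑ b, entryWeight M a b - ∑ b, entryWeight M b a = 0 := fun a => by
    rw [← re_gaugeDefect_apply_self, hM, Matrix.zero_apply, Complex.zero_re]
  calc mnormSq M = ∑ a, ∑ b, (1 + (y a - y b)) * entryWeight M a b := by
        simp only [add_mul, one_mul, Finset.sum_add_distrib, Finset.sum_sum_sub_mul_eq, hbalanced,
          mul_zero, Finset.sum_const_zero, add_zero, mnormSq_eq_sum_entryWeight]
    _ ≤ _ := by
        rw [mnormSq_mact_diagonalGL]
        gcongr with a _ b _
        · exact entryWeight_nonneg M a b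
        have hpos : ∀ a, 0 < ‖(x a : ℂ)‖ ^ 2 := fun a => pow_pos (norm_pos_iff.mpr (x a).ne_zero) 2
        have hlog := Real.log_le_sub_one_of_pos (div_pos (hpos a) (hpos b))
        rw [Real.log_div (hpos a).ne' (hpos b).ne', ← div_pow] at hlog
        linarith

theorem mnormSq_le_mnormSq_mact_of_gaugeDefect_eq_zero {M : MPSTensor d D}
    (hM : gaugeDefect M = 0) (g : GL (Fin D) ℂ) : mnormSq M ≤ mnormSq (mact g M) := by
  obtain ⟨x, u, hg⟩ := exists_conjTranspose_mul_self_eq_diagonalGL_mul_unitary g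
  have hN : gaugeDefect (mact (Unitary.toUnits u) M) = 0 := by
    rw [gaugeDefect_mact_unitary, hM, map_zero]
  rw [mnormSq_mact_eq_of_conjTranspose_mul_self_eq hg, mact_mul, ← mnormSq_mact_unitary u M]
  exact mnormSq_le_mnormSq_mact_diagonalGL hN x

lemma eq_zero_of_gaugeDefect_eq_diagonal {M : MPSTensor d D} {μ : Fin D → ℝ}
    (hμ : gaugeDefect M = diagonal (RCLike.ofReal ∘ μ))
    (hmin : ∀ x : Fin D → ℂˣ, mnormSq M ≤ mnormSq (mact (diagonalGL x) M)) : μ = 0 := by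
  set c := entryWeight M
  have hrow : ∀ a, ∑ b, c a b - ∑ b, c b a = μ a := fun a => by
    rw [← re_gaugeDefect_apply_self, hμ, diagonal_apply_eq]
    rfl
  set f : ℝ → ℝ := fun t => ∑ a, ∑ b, Real.exp (t * (2 * (μ b - μ a))) * c a b
  have hf : ∀ t, f t = mnormSq (mact (diagonalGL fun a =>
      Units.mk0 (Real.exp (-(t * μ a)) : ℂ) (by exact_mod_cast (Real.exp_pos _).ne')) M) := by
    intro t
    rw [mnormSq_mact_diagonalGL]
    refine Finset.sum_congr rfl fun a _ => Finset.sum_congr rfl fun b _ => ?_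
    simp only [Units.val_mk0, Complex.norm_real, Real.norm_eq_abs, Real.abs_exp, ← Real.exp_sub,
      ← Real.exp_nat_mul]
    congr 2
    push_cast
    ring
  have hf0 : f 0 = mnormSq M := by
    simp [f, c, mnormSq_eq_sum_entryWeight]
  have hlocalMin : IsLocalMin f 0 :=
    Filter.Eventually.of_forall fun t => hf0 ▸ hf t ▸ hmin _
  have hderiv : HasDerivAt f (∑ a, ∑ b, 2 * (μ b - μ a) * c a b) 0 := by
    refine HasDerivAt.fun_sum fun a _ => HasDerivAt.fun_sum fun b _ => ?_
    simpa using (((hasDerivAt_id (0 : ℝ)).mul_const (2 * (μ b - μ a))).exp).mul_const (c a b)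
  have hsum : ∑ a, ∑ b, 2 * (μ b - μ a) * c a b = -2 * ∑ a, μ a ^ 2 := by
    have hweighted := Finset.sum_sum_sub_mul_eq μ c
    simp only [hrow, ← sq] at hweighted
    rw [← hweighted, Finset.mul_sum]
    refine Finset.sum_congr rfl fun a _ => ?_
    rw [Finset.mul_sum]
    exact Finset.sum_congr rfl fun b _ => by ring
  have hsq : ∑ a, μ a ^ 2 = 0 := by
    linarith [hlocalMin.hasDerivAt_eq_zero hderiv]
  funext a
  exact pow_eq_zero_iff two_ne_zero |>.mp <|
    (Finset.sum_eq_zero_iff_of_nonneg fun b _ => sq_nonneg (μ b)).mp hsq a (Finset.mem_univ a)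

theorem gaugeDefect_eq_zero_of_forall_mnormSq_le {M : MPSTensor d D}
    (hmin : ∀ g : GL (Fin D) ℂ, mnormSq M ≤ mnormSq (mact g M)) : gaugeDefect M = 0 := by
  have hA : (gaugeDefect M).IsHermitian := by
    simp [IsHermitian, gaugeDefect, conjTranspose_sum]
  set v := hA.eigenvectorUnitary
  set N := mact (Unitary.toUnits (star v)) M
  have hN : gaugeDefect N = diagonal (RCLike.ofReal ∘ hA.eigenvalues) := by
    rw [gaugeDefect_mact_unitary]
    exact hA.conjStarAlgAut_star_eigenvectorUnitary
  have hNmin : ∀ x, mnormSq N ≤ mnormSq (mact (diagonalGL x) N) := fun x => by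
    rw [mnormSq_mact_unitary, ← mact_mul]
    exact hmin _
  have hμ := eq_zero_of_gaugeDefect_eq_diagonal hN hNmin
  rw [gaugeDefect_mact_unitary, hμ] at hN
  exact (map_eq_zero_iff _ (EquivLike.injective _)).mp (hN.trans (by simp))

end MPS

open MPS

theorem mps_minimal_canonical_form_characterization_general
    (d D : ℕ) (M : MPSTensor d D) :
    (mnorm M = sInf {r : ℝ | ∃ S ∈ closure (orbit M), r = mnorm S} ↔
      ∀ g : GL (Fin D) ℂ, mnorm (mact g M) ≥ mnorm M) ∧
    (mnorm M = sInf {r : ℝ | ∃ S ∈ closure (orbit M), r = mnorm S} ↔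
      (∑ i, M i * (M i)ᴴ) = ∑ i, (M i)ᴴ * M i) := by
  have hset : {r : ℝ | ∃ S ∈ closure (orbit M), r = mnorm S} = mnorm '' closure (orbit M) := by
    ext r
    simp [eq_comm]
  have hi_ii : mnorm M = sInf (mnorm '' closure (orbit M)) ↔
      ∀ g : GL (Fin D) ℂ, mnorm (mact g M) ≥ mnorm M := by
    rw [eq_sInf_image_closure_iff continuous_mnorm ⟨0, ?_⟩ (mem_orbit_self M)]
    · simp [orbit]
    · rintro _ ⟨N, rfl⟩
      exact Real.sqrt_nonneg _
  have hii_iii : (∀ g : GL (Fin D) ℂ, mnorm (mact g M) ≥ mnorm M) ↔ gaugeDefect M = 0 := by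
    simp only [ge_iff_le, mnorm_le_mnorm_iff]
    exact ⟨gaugeDefect_eq_zero_of_forall_mnormSq_le, mnormSq_le_mnormSq_mact_of_gaugeDefect_eq_zero⟩
  rw [hset]
  exact ⟨hi_ii, hi_ii.trans (hii_iii.trans sub_eq_zero)⟩

theorem mps_minimal_canonical_form_characterization
    (d D : ℕ) (hd : 0 < d) (hD : 0 < D) (M : MPSTensor d D) :
    (mnorm M = sInf {r : ℝ | ∃ S ∈ closure (orbit M), r = mnorm S} ↔
      ∀ g : GL (Fin D) ℂ, mnorm (mact g M) ≥ mnorm M) ∧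
    (mnorm M = sInf {r : ℝ | ∃ S ∈ closure (orbit M), r = mnorm S} ↔
      (∑ i, M i * (M i)ᴴ) = ∑ i, (M i)ᴴ * M i) :=
  mps_minimal_canonical_form_characterization_general d D M
end
end

section
/- Let S and T be PEPS tensors (same m, D₁,…,D_m, d) such that the orbit G·S is a closed subset of the space of tensors, S ∈ closure(G·T), and S ∉ G·T. Then there exists a nontrivial one-parameter subgroup of G fixing S: there exist invertible matrices h_k ∈ GL(D_k,ℂ) and integer vectors a_k ∈ ℤ^{D_k} (k = 1,…,m) such that, defining φ(z) := (h₁ diag(z^{a₁(1)},…,z^{a₁(D₁)}) h₁^{-1}, …, h_m diag(z^{a_m(1)},…,z^{a_m(D_m)}) h_m^{-1}) for z ∈ ℂ\{0}, one has φ(z)·S = S for all z ∈ ℂ\{0}, and for some z the tuple φ(z) is not a tuple of scalar multiples of identity matrices. -/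
/-!
STATEMENT 11 (Non-closed orbits imply a continuous symmetry).

Let `S`, `T` be PEPS tensors (same `m`, `D₁,…,D_m`, `d`) such that `G·S` is
closed, `S ∈ closure (G·T)` and `S ∉ G·T`.  Then there is a nontrivial
one-parameter subgroup `φ(z) = (h_k · diag(z^{a_k}) · h_k⁻¹)_k` of `G` with
`φ(z)·S = S` for all `z ≠ 0`, and `φ(z)` not a tuple of scalar multiples of the
identity for some `z ≠ 0`.
-/

open scoped BigOperators
open Matrix

noncomputable section

namespace PEPS

variable {m d : ℕ} {D : Fin m → ℕ}

/-- Index type for the virtual space `ℂ^{D₁} ⊗ ⋯ ⊗ ℂ^{D_m}`. -/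
abbrev Idx (D : Fin m → ℕ) : Type := ∀ k, Fin (D k)

/-- A PEPS tensor: a `d`-tuple of complex `(D₁⋯D_m) × (D₁⋯D_m)` matrices,
regarded as operators on `ℂ^{D₁} ⊗ ⋯ ⊗ ℂ^{D_m}`. -/
abbrev Tensor (D : Fin m → ℕ) (d : ℕ) : Type := Fin d → Matrix (Idx D) (Idx D) ℂ

/-- The Kronecker product `g₁ ⊗ ⋯ ⊗ g_m`. -/
def kron (g : ∀ k, Matrix (Fin (D k)) (Fin (D k)) ℂ) : Matrix (Idx D) (Idx D) ℂ :=
  Matrix.of fun a b => ∏ k, g k (a k) (b k)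

/-- The gauge action of `G = GL(D₁,ℂ) × ⋯ × GL(D_m,ℂ)`:
`(g₁,…,g_m) · T = ((g₁⊗⋯⊗g_m) T⁽ⁱ⁾ (g₁⊗⋯⊗g_m)⁻¹)ᵢ`. -/
def gact (g : ∀ k, GL (Fin (D k)) ℂ) (T : Tensor D d) : Tensor D d :=
  fun i => kron (fun k => (g k : Matrix (Fin (D k)) (Fin (D k)) ℂ)) * T i *
    kron (fun k => (((g k)⁻¹ : GL (Fin (D k)) ℂ) : Matrix (Fin (D k)) (Fin (D k)) ℂ))

/-- The gauge orbit `G · T`. -/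
def orbit (T : Tensor D d) : Set (Tensor D d) :=
  { S | ∃ g : ∀ k, GL (Fin (D k)) ℂ, S = gact g T }

/-- The square of the Frobenius (ℓ²) norm of a PEPS tensor. -/
def tnormSq (T : Tensor D d) : ℝ := ∑ i, ∑ a, ∑ b, ‖T i a b‖ ^ 2

/-- The Frobenius (ℓ²) norm of a PEPS tensor. -/
def tnorm (T : Tensor D d) : ℝ := Real.sqrt (tnormSq T)

/-- `Tmin` is a minimal canonical form of `T`: it lies in the orbit closure of `T`
and has minimal norm there. -/
def IsMCF (T Tmin : Tensor D d) : Prop :=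
  Tmin ∈ closure (orbit T) ∧ ∀ S ∈ closure (orbit T), tnorm Tmin ≤ tnorm S

/-- `Δ_k(T)`: the partial trace, over all tensor factors except the `k`-th, of
`∑ i, (T⁽ⁱ⁾ (T⁽ⁱ⁾)† − (T⁽ⁱ⁾)† T⁽ⁱ⁾)`; equivalently `ρ_{k,1} − ρ_{k,2}ᵀ`. -/
def Delta (T : Tensor D d) (k : Fin m) : Matrix (Fin (D k)) (Fin (D k)) ℂ :=
  Matrix.of fun a b => ∑ i, ∑ x : Idx D,
    if x k = a then (T i * (T i)ᴴ - (T i)ᴴ * T i) x (Function.update x k b) else 0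

end PEPS

namespace PEPS

/-- Conjugation action of a tuple of matrices (together with a tuple of
inverses) on a PEPS tensor: `T⁽ⁱ⁾ ↦ (g₁⊗⋯⊗g_m) T⁽ⁱ⁾ (h₁⊗⋯⊗h_m)`. -/
def matAct {m d : ℕ} {D : Fin m → ℕ}
    (g h : ∀ k, Matrix (Fin (D k)) (Fin (D k)) ℂ) (T : Tensor D d) : Tensor D d :=
  fun i => kron g * T i * kron h

/-- The multiplicative one-parameter subgroup of `G` determined by base-change
matrices `h_k ∈ GL(D_k,ℂ)` and integer vectors `a_k ∈ ℤ^{D_k}`: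
`φ(z)_k = h_k · diag (z^{a_k(1)}, …, z^{a_k(D_k)}) · h_k⁻¹`. -/
def oneParam {m : ℕ} {D : Fin m → ℕ} (h : ∀ k, GL (Fin (D k)) ℂ)
    (a : ∀ k, Fin (D k) → ℤ) (z : ℂ) (k : Fin m) :
    Matrix (Fin (D k)) (Fin (D k)) ℂ :=
  (h k : Matrix (Fin (D k)) (Fin (D k)) ℂ) *
    Matrix.diagonal (fun j => z ^ (a k j)) *
    (((h k)⁻¹ : GL (Fin (D k)) ℂ) : Matrix (Fin (D k)) (Fin (D k)) ℂ)

end PEPS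

open PEPS

namespace PEPS

variable {m d : ℕ} {D : Fin m → ℕ}

lemma kron_mul (g h : ∀ k, Matrix (Fin (D k)) (Fin (D k)) ℂ) :
    kron g * kron h = kron (fun k => g k * h k) := by
  ext a b
  simp only [kron, Matrix.mul_apply, Matrix.of_apply]
  simp only [← Finset.prod_mul_distrib]
  rw [Finset.prod_univ_sum, Fintype.piFinset_univ]

lemma kron_one : kron (D := D) (fun _ => 1) = 1 := by
  ext a b
  by_cases hab : a = b
  · subst hab; simp [kron, Matrix.one_apply]
  · obtain ⟨k, hk⟩ := Function.ne_iff.mp hab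
    simp only [kron, Matrix.of_apply, Matrix.one_apply, hab, if_false]
    exact Finset.prod_eq_zero (Finset.mem_univ k) (by simp [Matrix.one_apply, hk])

lemma kron_diagonal (f : ∀ k, Fin (D k) → ℂ) :
    kron (fun k => Matrix.diagonal (f k)) =
      Matrix.diagonal (fun x : Idx D => ∏ k, f k (x k)) := by
  ext a b
  by_cases hab : a = b
  · subst hab; simp [kron, Matrix.diagonal_apply_eq]
  · obtain ⟨k, hk⟩ := Function.ne_iff.mp hab
    simp only [kron, Matrix.of_apply, Matrix.diagonal_apply_ne _ hab]
    exact Finset.prod_eq_zero (Finset.mem_univ k) (by simp [Matrix.diagonal_apply_ne _ hk])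

lemma matAct_matAct (p q p' q' : ∀ k, Matrix (Fin (D k)) (Fin (D k)) ℂ) (T : Tensor D d) :
    matAct p q (matAct p' q' T) =
      matAct (fun k => p k * p' k) (fun k => q' k * q k) T := by
  funext i
  simp only [matAct, ← kron_mul]
  noncomm_ring

lemma matAct_one (T : Tensor D d) : matAct (fun _ => 1) (fun _ => 1) T = T := by
  funext i
  simp [matAct, kron_one]

/-- A pair of pointwise mutually inverse tuples of matrices. -/
def Inv2 (p q : ∀ k, Matrix (Fin (D k)) (Fin (D k)) ℂ) : Prop :=
  (∀ k, p k * q k = 1) ∧ (∀ k, q k * p k = 1)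

/-- Package an `Inv2` pair as a tuple of `GL`s. -/
def Inv2.toGL {p q : ∀ k, Matrix (Fin (D k)) (Fin (D k)) ℂ} (h : Inv2 p q) :
    ∀ k, GL (Fin (D k)) ℂ := fun k => ⟨p k, q k, h.1 k, h.2 k⟩

lemma gact_eq_matAct (g : ∀ k, GL (Fin (D k)) ℂ) (T : Tensor D d) :
    gact g T = matAct (fun k => (g k : Matrix (Fin (D k)) (Fin (D k)) ℂ))
      (fun k => (((g k)⁻¹ : GL (Fin (D k)) ℂ) : Matrix (Fin (D k)) (Fin (D k)) ℂ)) T := rfl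

lemma matAct_toGL {p q : ∀ k, Matrix (Fin (D k)) (Fin (D k)) ℂ} (h : Inv2 p q) (T : Tensor D d) :
    gact h.toGL T = matAct p q T := rfl

lemma Inv2.symm {p q : ∀ k, Matrix (Fin (D k)) (Fin (D k)) ℂ} (h : Inv2 p q) : Inv2 q p :=
  ⟨h.2, h.1⟩

lemma self_mem_orbit (T : Tensor D d) : T ∈ orbit T := by
  refine ⟨fun _ => 1, ?_⟩
  have : gact (D := D) (d := d) (fun _ => 1) T
      = matAct (fun _ => 1) (fun _ => 1) T := by
    rw [gact_eq_matAct]; simp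
  rw [this, matAct_one]

lemma gact_gact (g g' : ∀ k, GL (Fin (D k)) ℂ) (T : Tensor D d) :
    gact g (gact g' T) = gact (fun k => g k * g' k) T := by
  have e2 : (fun k => (((g k * g' k)⁻¹ : GL (Fin (D k)) ℂ) : Matrix (Fin (D k)) (Fin (D k)) ℂ))
      = fun k => ((((g' k)⁻¹ : GL (Fin (D k)) ℂ) : Matrix (Fin (D k)) (Fin (D k)) ℂ) *
        (((g k)⁻¹ : GL (Fin (D k)) ℂ) : Matrix (Fin (D k)) (Fin (D k)) ℂ)) := by
    funext k; rw [_root_.mul_inv_rev]; rfl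
  rw [gact_eq_matAct g, gact_eq_matAct g', gact_eq_matAct (fun k => g k * g' k), e2, matAct_matAct]
  rfl

/-- The orbit of `V` is stable under invertible `matAct`s. -/
lemma matAct_mem_orbit {p q : ∀ k, Matrix (Fin (D k)) (Fin (D k)) ℂ} (h : Inv2 p q)
    {U V : Tensor D d} (hU : U ∈ orbit V) : matAct p q U ∈ orbit V := by
  obtain ⟨g, rfl⟩ := hU
  exact ⟨fun k => h.toGL k * g k, by rw [← matAct_toGL h, gact_gact]⟩

lemma matAct_cancel {p q : ∀ k, Matrix (Fin (D k)) (Fin (D k)) ℂ} (h : Inv2 p q)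
    (U : Tensor D d) : matAct q p (matAct p q U) = U := by
  rw [matAct_matAct]
  have h1 : (fun k => q k * p k) = fun _ : Fin m => (1 : Matrix _ _ ℂ) := funext h.2
  rw [h1, matAct_one]

end PEPS

namespace PEPS

variable {m d : ℕ} {D : Fin m → ℕ}

instance : FirstCountableTopology (Tensor D d) :=
  inferInstanceAs (FirstCountableTopology (Fin d → Idx D → Idx D → ℂ))

instance : FirstCountableTopology (∀ k, Matrix (Fin (D k)) (Fin (D k)) ℂ) :=
  inferInstanceAs (FirstCountableTopology (∀ k : Fin m, Fin (D k) → Fin (D k) → ℂ))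

lemma tendsto_tensor_iff {F : ℕ → Tensor D d} {A : Tensor D d} :
    Filter.Tendsto F Filter.atTop (nhds A) ↔
      ∀ i x y, Filter.Tendsto (fun n => F n i x y) Filter.atTop (nhds (A i x y)) := by
  rw [tendsto_pi_nhds]
  exact forall_congr' fun i => by
    exact tendsto_pi_nhds.trans (forall_congr' fun x => tendsto_pi_nhds)

lemma continuous_kron :
    Continuous (kron : (∀ k, Matrix (Fin (D k)) (Fin (D k)) ℂ) → Matrix (Idx D) (Idx D) ℂ) := by
  apply continuous_matrix
  intro a b
  have e : (fun g : ∀ k, Matrix (Fin (D k)) (Fin (D k)) ℂ => kron g a b)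
      = fun g => ∏ k, g k (a k) (b k) := rfl
  rw [e]
  apply continuous_finset_prod
  intro k _
  exact (continuous_apply (b k)).comp ((continuous_apply (a k)).comp (continuous_apply k))

lemma tendsto_matAct {pn qn : ℕ → ∀ k, Matrix (Fin (D k)) (Fin (D k)) ℂ}
    {Un : ℕ → Tensor D d} {p q : ∀ k, Matrix (Fin (D k)) (Fin (D k)) ℂ} {U : Tensor D d}
    (hp : Filter.Tendsto pn Filter.atTop (nhds p))
    (hq : Filter.Tendsto qn Filter.atTop (nhds q))
    (hU : Filter.Tendsto Un Filter.atTop (nhds U)) :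
    Filter.Tendsto (fun n => matAct (pn n) (qn n) (Un n)) Filter.atTop
      (nhds (matAct p q U)) := by
  have hkron : ∀ (rn : ℕ → ∀ k, Matrix (Fin (D k)) (Fin (D k)) ℂ)
      (r : ∀ k, Matrix (Fin (D k)) (Fin (D k)) ℂ),
      Filter.Tendsto rn Filter.atTop (nhds r) → ∀ x v : Idx D,
      Filter.Tendsto (fun n => kron (rn n) x v) Filter.atTop (nhds (kron r x v)) := by
    intro rn r hr x v
    have e : ∀ n, kron (rn n) x v = ∏ k, rn n k (x k) (v k) := fun n => rfl
    have e' : kron r x v = ∏ k, r k (x k) (v k) := rfl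
    rw [e']
    simp only [e]
    apply tendsto_finset_prod
    intro k _
    have h1 := tendsto_pi_nhds.mp hr k
    have h2 := tendsto_pi_nhds.mp h1 (x k)
    exact tendsto_pi_nhds.mp h2 (v k)
  have hUe : ∀ i v w, Filter.Tendsto (fun n => Un n i v w) Filter.atTop (nhds (U i v w)) := by
    intro i v w
    exact tendsto_pi_nhds.mp (tendsto_pi_nhds.mp (tendsto_pi_nhds.mp hU i) v) w
  rw [tendsto_tensor_iff]
  intro i x y
  have e : ∀ n, matAct (pn n) (qn n) (Un n) i x y
      = ∑ w, (∑ v, kron (pn n) x v * Un n i v w) * kron (qn n) w y := by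
    intro n
    simp [matAct, Matrix.mul_apply]
  have e' : matAct p q U i x y = ∑ w, (∑ v, kron p x v * U i v w) * kron q w y := by
    simp [matAct, Matrix.mul_apply]
  rw [e']
  simp only [e]
  apply tendsto_finset_sum
  intro w _
  apply Filter.Tendsto.mul
  · apply tendsto_finset_sum
    intro v _
    exact (hkron pn p hp x v).mul (hUe i v w)
  · exact hkron qn q hq w y

/-- The set of tuples of unitary matrices. -/
def USet (D : Fin m → ℕ) : Set (∀ k, Matrix (Fin (D k)) (Fin (D k)) ℂ) :=
  {u | ∀ k, u k ∈ Matrix.unitaryGroup (Fin (D k)) ℂ}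

lemma isCompact_USet : IsCompact (USet D) := by
  classical
  let IBox : ∀ k : Fin m, Set (Matrix (Fin (D k)) (Fin (D k)) ℂ) := fun k =>
    Set.pi Set.univ (fun _ : Fin (D k) => Set.pi Set.univ
      (fun _ : Fin (D k) => Metric.closedBall (0 : ℂ) 1))
  have hIBox : ∀ k, IsCompact (IBox k) := fun k =>
    isCompact_univ_pi fun _ => isCompact_univ_pi fun _ => isCompact_closedBall _ _
  have hBox : IsCompact (Set.pi Set.univ IBox :
      Set (∀ k, Matrix (Fin (D k)) (Fin (D k)) ℂ)) := isCompact_univ_pi hIBox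
  apply hBox.of_isClosed_subset
  · have : USet D = ⋂ k : Fin m,
        (fun u : ∀ k, Matrix (Fin (D k)) (Fin (D k)) ℂ => star (u k) * u k) ⁻¹' {1} := by
      ext u
      simp only [USet, Set.mem_setOf_eq, Set.mem_iInter, Set.mem_preimage,
        Set.mem_singleton_iff]
      exact forall_congr' fun k => Matrix.mem_unitaryGroup_iff'
    rw [this]
    refine isClosed_iInter fun k => IsClosed.preimage ?_ isClosed_singleton
    exact Continuous.matrix_mul ((continuous_apply k).matrix_conjTranspose) (continuous_apply k)
  · intro u hu
    rw [Set.mem_univ_pi]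
    intro k
    show u k ∈ Set.pi Set.univ _
    refine Set.mem_univ_pi.mpr ?_
    intro i
    rw [Set.mem_univ_pi]
    intro j
    have h1 : (u k)ᴴ * u k = 1 := Matrix.mem_unitaryGroup_iff'.mp (hu k)
    have h2 : ∑ l, Complex.normSq (u k l j) = 1 := by
      have := congrFun (congrFun h1 j) j
      rw [Matrix.mul_apply] at this
      simp only [Matrix.one_apply_eq] at this
      have e : ∀ l, (u k)ᴴ j l * u k l j = (Complex.normSq (u k l j) : ℂ) := by
        intro l
        rw [Matrix.conjTranspose_apply]
        rw [mul_comm, Complex.star_def, Complex.mul_conj]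
      rw [Finset.sum_congr rfl (fun l _ => e l)] at this
      exact_mod_cast this
    have h3 : Complex.normSq (u k i j) ≤ 1 := by
      rw [← h2]
      exact Finset.single_le_sum (f := fun l => Complex.normSq (u k l j))
        (fun l _ => Complex.normSq_nonneg _) (Finset.mem_univ i)
    rw [Metric.mem_closedBall, dist_zero_right]
    have h4 : ‖u k i j‖ ^ 2 = Complex.normSq (u k i j) := Complex.sq_norm _
    nlinarith [norm_nonneg (u k i j)]

lemma unitary_mul_star {N : ℕ} {U : Matrix (Fin N) (Fin N) ℂ}
    (h : U ∈ Matrix.unitaryGroup (Fin N) ℂ) : U * Uᴴ = 1 :=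
  Matrix.mem_unitaryGroup_iff.mp h

lemma star_mul_unitary {N : ℕ} {U : Matrix (Fin N) (Fin N) ℂ}
    (h : U ∈ Matrix.unitaryGroup (Fin N) ℂ) : Uᴴ * U = 1 :=
  Matrix.mem_unitaryGroup_iff'.mp h

end PEPS

namespace PEPS

/-- Singular value decomposition of an invertible complex matrix, with strictly
positive diagonal part. -/
lemma svd_of_invertible {N : ℕ} (A B : Matrix (Fin N) (Fin N) ℂ) (hAB : A * B = 1) :
    ∃ (U V : Matrix (Fin N) (Fin N) ℂ) (s : Fin N → ℝ),
      U ∈ Matrix.unitaryGroup (Fin N) ℂ ∧ V ∈ Matrix.unitaryGroup (Fin N) ℂ ∧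
      (∀ j, 0 < s j) ∧ A = U * Matrix.diagonal (fun j => (s j : ℂ)) * V := by
  classical
  set H : Matrix (Fin N) (Fin N) ℂ := Aᴴ * A with hHdef
  have hH : H.IsHermitian := Matrix.isHermitian_conjTranspose_mul_self A
  set ev : Fin N → ℝ := hH.eigenvalues with hev
  have hdetA : IsUnit A.det := Matrix.isUnit_det_of_right_inverse hAB
  have hdetH : H.det ≠ 0 := by
    rw [hHdef, Matrix.det_mul, Matrix.det_conjTranspose]
    exact mul_ne_zero (star_ne_zero.mpr hdetA.ne_zero) hdetA.ne_zero
  have hevpos : ∀ j, 0 < ev j := by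
    intro j
    have hnn : 0 ≤ ev j := Matrix.eigenvalues_conjTranspose_mul_self_nonneg A j
    rcases hnn.lt_or_eq with h | h
    · exact h
    · exfalso
      apply hdetH
      rw [hH.det_eq_prod_eigenvalues]
      exact Finset.prod_eq_zero (Finset.mem_univ j) (by rw [← hev, ← h]; norm_num)
  set s : Fin N → ℝ := fun j => Real.sqrt (ev j) with hs
  have hspos : ∀ j, 0 < s j := fun j => Real.sqrt_pos.mpr (hevpos j)
  have hssq : ∀ j, s j * s j = ev j := fun j => Real.mul_self_sqrt (hevpos j).le
  set W : Matrix (Fin N) (Fin N) ℂ := (hH.eigenvectorUnitary : Matrix (Fin N) (Fin N) ℂ)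
    with hW
  have hWmem : W ∈ Matrix.unitaryGroup (Fin N) ℂ := (hH.eigenvectorUnitary).2
  have spec : H = W * Matrix.diagonal (RCLike.ofReal ∘ ev) * Wᴴ := by
    rw [← Matrix.star_eq_conjTranspose]
    exact hH.spectral_theorem
  set Ds : Matrix (Fin N) (Fin N) ℂ := Matrix.diagonal (fun j => (s j : ℂ)) with hDs
  set Dinv : Matrix (Fin N) (Fin N) ℂ := Matrix.diagonal (fun j => ((s j)⁻¹ : ℝ)) with hDinv
  set U : Matrix (Fin N) (Fin N) ℂ := A * W * Dinv with hU
  have diag_one : ∀ (f : Fin N → ℂ), (∀ j, f j = 1) → Matrix.diagonal f = 1 := by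
    intro f hf
    rw [funext hf, Matrix.diagonal_one]
  have hDinvDs : Dinv * Ds = 1 := by
    rw [hDinv, hDs, Matrix.diagonal_mul_diagonal]
    apply diag_one
    intro j
    rw [← Complex.ofReal_mul, inv_mul_cancel₀ (hspos j).ne']
    norm_num
  have hWHW : Wᴴ * H * W = Matrix.diagonal (RCLike.ofReal ∘ ev) := by
    rw [spec]
    have e : Wᴴ * (W * Matrix.diagonal (RCLike.ofReal ∘ ev) * Wᴴ) * W
        = (Wᴴ * W) * Matrix.diagonal (RCLike.ofReal ∘ ev) * (Wᴴ * W) := by noncomm_ring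
    rw [e, star_mul_unitary hWmem, one_mul, mul_one]
  have hUmem : U ∈ Matrix.unitaryGroup (Fin N) ℂ := by
    rw [Matrix.mem_unitaryGroup_iff']
    have hstarDinv : star Dinv = Dinv := by
      rw [hDinv, Matrix.star_eq_conjTranspose, Matrix.diagonal_conjTranspose]
      have e0 : (star fun j : Fin N => (((s j)⁻¹ : ℝ) : ℂ)) = fun j : Fin N => (((s j)⁻¹ : ℝ) : ℂ) := by
        funext j
        simp [Pi.star_apply, Complex.star_def, Complex.conj_ofReal]
      rw [e0]
    have e1 : star U = Dinv * Wᴴ * Aᴴ := by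
      rw [hU, StarMul.star_mul, StarMul.star_mul, hstarDinv, Matrix.star_eq_conjTranspose,
        Matrix.star_eq_conjTranspose]
      noncomm_ring
    rw [e1]
    have e2 : Dinv * Wᴴ * Aᴴ * (A * W * Dinv) = Dinv * (Wᴴ * H * W) * Dinv := by
      rw [hHdef]; noncomm_ring
    rw [e2, hWHW, hDinv, Matrix.diagonal_mul_diagonal, Matrix.diagonal_mul_diagonal]
    apply diag_one
    intro j
    have hrc : (RCLike.ofReal ∘ ev) j = ((ev j : ℝ) : ℂ) := rfl
    show (((s j)⁻¹ : ℝ) : ℂ) * (RCLike.ofReal ∘ ev) j * (((s j)⁻¹ : ℝ) : ℂ) = 1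
    rw [hrc, ← hssq j]
    have hne : (s j : ℝ) ≠ 0 := (hspos j).ne'
    push_cast
    field_simp
    rw [div_self]
    exact_mod_cast hne
  refine ⟨U, Wᴴ, s, hUmem, ?_, hspos, ?_⟩
  · rw [Matrix.mem_unitaryGroup_iff, Matrix.star_eq_conjTranspose,
      Matrix.conjTranspose_conjTranspose]
    exact star_mul_unitary hWmem
  · rw [hU]
    have e : A * W * Dinv * Ds * Wᴴ = A * (W * ((Dinv * Ds) * Wᴴ)) := by noncomm_ring
    rw [e, hDinvDs, one_mul]
    have e2 : A * (W * Wᴴ) = A * W * Wᴴ := by noncomm_ring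
    rw [unitary_mul_star hWmem, mul_one]

end PEPS

namespace PEPS

variable {m : ℕ} {D : Fin m → ℕ}

/-- The linear functional `c ↦ ∑ₖ (cₖ(xₖ) - cₖ(yₖ))`. -/
def Lfun (c : ∀ k, Fin (D k) → ℝ) (x y : Idx D) : ℝ := ∑ k, (c k (x k) - c k (y k))

/-- Integer version of `Lfun`. -/
def LZ (a : ∀ k, Fin (D k) → ℤ) (x y : Idx D) : ℤ := ∑ k, (a k (x k) - a k (y k))

/-- Rational version of `Lfun`. -/
def LQ (c : ∀ k, Fin (D k) → ℚ) (x y : Idx D) : ℚ := ∑ k, (c k (x k) - c k (y k))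

lemma Lfun_neg (c : ∀ k, Fin (D k) → ℝ) (x y : Idx D) : Lfun c y x = - Lfun c x y := by
  rw [Lfun, Lfun, ← Finset.sum_neg_distrib]
  exact Finset.sum_congr rfl fun k _ => by ring

lemma LZ_neg (a : ∀ k, Fin (D k) → ℤ) (x y : Idx D) : LZ a y x = - LZ a x y := by
  rw [LZ, LZ, ← Finset.sum_neg_distrib]
  exact Finset.sum_congr rfl fun k _ => by ring

lemma LZ_cast (a : ∀ k, Fin (D k) → ℤ) (x y : Idx D) :
    ((LZ a x y : ℤ) : ℝ) = Lfun (fun k j => (a k j : ℝ)) x y := by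
  rw [LZ, Lfun]
  push_cast
  rfl

set_option maxHeartbeats 2000000 in
/-- Key rationalization lemma: any real vector `b` admits an integer vector `a`
whose induced functional `LZ a` vanishes where `Lfun b` does and is negative
where `Lfun b` is. -/
lemma rationalize (b : ∀ k, Fin (D k) → ℝ) :
    ∃ a : ∀ k, Fin (D k) → ℤ, ∀ x y : Idx D,
      (Lfun b x y = 0 → LZ a x y = 0) ∧ (Lfun b x y < 0 → LZ a x y < 0) := by
  classical
  -- span of the values of b over ℚ
  set bset : Set ℝ := Set.range (fun p : Σ k, Fin (D k) => b p.1 p.2) with hbset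
  have hfin : bset.Finite := Set.finite_range _
  haveI : Module.Finite ℚ (Submodule.span ℚ bset) := Module.Finite.span_of_finite ℚ hfin
  set V := Submodule.span ℚ bset with hV
  let β : Module.Basis (Module.Free.ChooseBasisIndex ℚ V) ℚ V := Module.Free.chooseBasis ℚ V
  set ι := Module.Free.ChooseBasisIndex ℚ V with hι
  have hmem : ∀ k (j : Fin (D k)), b k j ∈ V :=
    fun k j => Submodule.subset_span ⟨⟨k, j⟩, rfl⟩
  set bv : ∀ k, Fin (D k) → V := fun k j => ⟨b k j, hmem k j⟩ with hbv
  set q : ι → ∀ k, Fin (D k) → ℚ := fun t k j => β.repr (bv k j) t with hq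
  have hrepr : ∀ k (j : Fin (D k)), b k j = ∑ t, (q t k j : ℝ) * (β t : ℝ) := by
    intro k j
    have h0 : ∑ t, β.repr (bv k j) t • β t = bv k j := β.sum_repr (bv k j)
    have h1 := congrArg (fun v : V => (v : ℝ)) h0
    change _ = b k j at h1
    rw [← h1]
    push_cast
    exact Finset.sum_congr rfl fun t _ => by rw [Rat.smul_def]
  have hli : LinearIndependent ℚ (fun t : ι => (β t : ℝ)) :=
    β.linearIndependent.map' V.subtype (Submodule.ker_subtype V)
  have hLb : ∀ x y : Idx D, Lfun b x y = ∑ t, ((LQ (q t) x y : ℚ) : ℝ) * (β t : ℝ) := by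
    intro x y
    have e1 : ∀ k, b k (x k) - b k (y k)
        = ∑ t, ((q t k (x k) - q t k (y k) : ℚ) : ℝ) * (β t : ℝ) := by
      intro k
      rw [hrepr k (x k), hrepr k (y k), ← Finset.sum_sub_distrib]
      exact Finset.sum_congr rfl fun t _ => by push_cast; ring
    rw [Lfun, Finset.sum_congr rfl (fun k _ => e1 k), Finset.sum_comm]
    refine Finset.sum_congr rfl fun t _ => ?_
    rw [← Finset.sum_mul]
    congr 1
    rw [LQ]
    push_cast
    rfl
  have hzero_iff : ∀ x y : Idx D, Lfun b x y = 0 ↔ ∀ t, LQ (q t) x y = 0 := by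
    intro x y
    constructor
    · intro h t
      refine Fintype.linearIndependent_iff.mp hli (fun t => LQ (q t) x y) ?_ t
      rw [← h, hLb]
      exact Finset.sum_congr rfl fun t _ => by rw [Rat.smul_def]
    · intro h
      rw [hLb]
      simp [h]
  -- the set of "negative" pairs
  set F : Finset (Idx D × Idx D) :=
    Finset.univ.filter (fun p : Idx D × Idx D => Lfun b p.1 p.2 < 0) with hF
  -- choose a rational approximation of the coordinates of β
  set Ω : Set (ι → ℝ) :=
    {ε | ∀ p ∈ F, ∑ t, ε t * ((LQ (q t) p.1 p.2 : ℚ) : ℝ) < 0} with hΩ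
  have hopen : IsOpen Ω := by
    have : Ω = ⋂ p ∈ F, ((fun ε : ι → ℝ => ∑ t, ε t * ((LQ (q t) p.1 p.2 : ℚ) : ℝ)) ⁻¹'
        Set.Iio 0) := by
      ext ε
      simp [hΩ]
    rw [this]
    refine isOpen_biInter_finset fun p _ => ?_
    refine IsOpen.preimage ?_ isOpen_Iio
    exact continuous_finset_sum _ fun t _ => (continuous_apply t).mul continuous_const
  have hε₀ : (fun t => (β t : ℝ)) ∈ Ω := by
    intro p hp
    have : Lfun b p.1 p.2 < 0 := (Finset.mem_filter.mp hp).2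
    rw [hLb] at this
    calc ∑ t, (β t : ℝ) * ((LQ (q t) p.1 p.2 : ℚ) : ℝ)
        = ∑ t, ((LQ (q t) p.1 p.2 : ℚ) : ℝ) * (β t : ℝ) :=
          Finset.sum_congr rfl fun t _ => mul_comm _ _
      _ < 0 := this
  -- rational points are dense
  have hdense : Dense (Set.pi Set.univ fun _ : ι => Set.range ((↑) : ℚ → ℝ)) :=
    dense_pi Set.univ fun _ _ => Rat.denseRange_cast
  obtain ⟨ε, hεΩ, hεrat⟩ : ∃ ε ∈ Ω, ε ∈ Set.pi Set.univ fun _ : ι => Set.range ((↑) : ℚ → ℝ) := by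
    have hne : Ω.Nonempty := ⟨_, hε₀⟩
    obtain ⟨ε, h1, h2⟩ := hdense.exists_mem_open hopen hne
    exact ⟨ε, h2, h1⟩
  choose εq hεq using fun t => hεrat t (Set.mem_univ t)
  -- the rational approximant
  set aq : ∀ k, Fin (D k) → ℚ := fun k j => ∑ t, εq t * q t k j with haq
  have hLaq : ∀ x y : Idx D, LQ aq x y = ∑ t, εq t * LQ (q t) x y := by
    intro x y
    rw [LQ]
    have e1 : ∀ k, aq k (x k) - aq k (y k) = ∑ t, εq t * (q t k (x k) - q t k (y k)) := by
      intro k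
      rw [haq]
      simp only
      rw [← Finset.sum_sub_distrib]
      exact Finset.sum_congr rfl fun t _ => by ring
    rw [Finset.sum_congr rfl (fun k _ => e1 k), Finset.sum_comm]
    refine Finset.sum_congr rfl fun t _ => ?_
    rw [LQ, Finset.mul_sum]
  have hA : ∀ x y : Idx D, Lfun b x y = 0 → LQ aq x y = 0 := by
    intro x y h
    rw [hLaq]
    have h0 := (hzero_iff x y).mp h
    simp [h0]
  have hB : ∀ x y : Idx D, Lfun b x y < 0 → LQ aq x y < 0 := by
    intro x y h
    have hpF : (x, y) ∈ F := Finset.mem_filter.mpr ⟨Finset.mem_univ _, h⟩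
    have := hεΩ (x, y) hpF
    have e : ∑ t, ε t * ((LQ (q t) x y : ℚ) : ℝ) = ((LQ aq x y : ℚ) : ℝ) := by
      rw [hLaq]
      push_cast
      exact Finset.sum_congr rfl fun t _ => by rw [hεq t]
    rw [e] at this
    exact_mod_cast this
  -- clear denominators
  set N : ℕ := ∏ p : Σ k, Fin (D k), (aq p.1 p.2).den with hN
  have hNpos : 0 < N := Finset.prod_pos fun p _ => (aq p.1 p.2).den_pos
  have hint : ∀ k (j : Fin (D k)), ∃ z : ℤ, (z : ℚ) = (N : ℚ) * aq k j := by
    intro k j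
    have hd : (aq k j).den ∣ N :=
      Finset.dvd_prod_of_mem (fun p : Σ k, Fin (D k) => (aq p.1 p.2).den)
        (Finset.mem_univ ⟨k, j⟩)
    obtain ⟨M, hM⟩ := hd
    refine ⟨(aq k j).num * M, ?_⟩
    have hden : ((aq k j).den : ℚ) ≠ 0 := by exact_mod_cast (aq k j).den_nz
    have hnum : ((aq k j).num : ℚ) = aq k j * (aq k j).den := by
      have h := Rat.num_div_den (aq k j)
      rw [div_eq_iff hden] at h
      exact h
    push_cast
    rw [hnum, hM]
    push_cast
    ring
  choose a ha using fun k => fun j : Fin (D k) => hint k j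
  refine ⟨a, fun x y => ?_⟩
  have hcast : ((LZ a x y : ℤ) : ℚ) = (N : ℚ) * LQ aq x y := by
    rw [LZ, LQ]
    push_cast
    rw [Finset.mul_sum]
    refine Finset.sum_congr rfl fun k _ => ?_
    rw [ha k (x k), ha k (y k)]
    ring
  constructor
  · intro h
    have := hA x y h
    have h2 : ((LZ a x y : ℤ) : ℚ) = 0 := by rw [hcast, this, mul_zero]
    exact_mod_cast h2
  · intro h
    have := hB x y h
    have h2 : ((LZ a x y : ℤ) : ℚ) < 0 := by
      rw [hcast]
      exact mul_neg_of_pos_of_neg (by exact_mod_cast hNpos) this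
    exact_mod_cast h2

end PEPS

namespace PEPS

variable {m d : ℕ} {D : Fin m → ℕ}

lemma tendsto_rtuple_iff {F : ℕ → ∀ k, Fin (D k) → ℝ} {c : ∀ k, Fin (D k) → ℝ} :
    Filter.Tendsto F Filter.atTop (nhds c) ↔
      ∀ k j, Filter.Tendsto (fun n => F n k j) Filter.atTop (nhds (c k j)) := by
  rw [tendsto_pi_nhds]
  exact forall_congr' fun k => tendsto_pi_nhds

lemma tendsto_mtuple_iff {F : ℕ → ∀ k, Matrix (Fin (D k)) (Fin (D k)) ℂ}
    {u : ∀ k, Matrix (Fin (D k)) (Fin (D k)) ℂ} :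
    Filter.Tendsto F Filter.atTop (nhds u) ↔
      ∀ k i j, Filter.Tendsto (fun n => F n k i j) Filter.atTop (nhds (u k i j)) := by
  rw [tendsto_pi_nhds]
  refine forall_congr' fun k => ?_
  exact tendsto_pi_nhds.trans (forall_congr' fun i => tendsto_pi_nhds)

lemma tendsto_star_mtuple {F : ℕ → ∀ k, Matrix (Fin (D k)) (Fin (D k)) ℂ}
    {u : ∀ k, Matrix (Fin (D k)) (Fin (D k)) ℂ}
    (h : Filter.Tendsto F Filter.atTop (nhds u)) :
    Filter.Tendsto (fun n => fun k => (F n k)ᴴ) Filter.atTop (nhds (fun k => (u k)ᴴ)) := by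
  rw [tendsto_mtuple_iff] at h ⊢
  intro k i j
  have := h k j i
  have hc : Filter.Tendsto (fun z : ℂ => starRingEnd ℂ z) (nhds (u k j i))
      (nhds (starRingEnd ℂ (u k j i))) := (Complex.continuous_conj).tendsto _
  exact hc.comp this

lemma tendsto_Lfun {F : ℕ → ∀ k, Fin (D k) → ℝ} {c : ∀ k, Fin (D k) → ℝ}
    (h : Filter.Tendsto F Filter.atTop (nhds c)) (x y : Idx D) :
    Filter.Tendsto (fun n => Lfun (F n) x y) Filter.atTop (nhds (Lfun c x y)) := by
  rw [tendsto_rtuple_iff] at h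
  have : ∀ n, Lfun (F n) x y = ∑ k, (F n k (x k) - F n k (y k)) := fun n => rfl
  simp only [this, Lfun]
  exact tendsto_finset_sum _ fun k _ => (h k (x k)).sub (h k (y k))

lemma matAct_diagonal_apply (e f : ∀ k, Fin (D k) → ℂ) (M : Tensor D d) (i : Fin d)
    (x y : Idx D) :
    matAct (fun k => Matrix.diagonal (e k)) (fun k => Matrix.diagonal (f k)) M i x y
      = (∏ k, e k (x k)) * M i x y * (∏ k, f k (y k)) := by
  show (kron (fun k => Matrix.diagonal (e k)) * M i * kron (fun k => Matrix.diagonal (f k))) x y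
    = _
  rw [kron_diagonal, kron_diagonal, Matrix.mul_diagonal, Matrix.diagonal_mul]

lemma zpow_finset_sum (z : ℂ) (hz : z ≠ 0) {κ : Type*} (s : Finset κ) (f : κ → ℤ) :
    ∏ k ∈ s, z ^ f k = z ^ (∑ k ∈ s, f k) := by
  classical
  induction s using Finset.induction_on with
  | empty => simp
  | insert _ _ hne ih =>
      rw [Finset.prod_insert hne, Finset.sum_insert hne, ih, ← zpow_add₀ hz]

lemma LZ_split (a : ∀ k, Fin (D k) → ℤ) (x y : Idx D) :
    LZ a x y = (∑ k, a k (x k)) - ∑ k, a k (y k) := by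
  rw [LZ, Finset.sum_sub_distrib]

lemma Lfun_update (b : ∀ k, Fin (D k) → ℝ) (w : Idx D) (k0 : Fin m) (j1 j2 : Fin (D k0)) :
    Lfun b (Function.update w k0 j1) (Function.update w k0 j2) = b k0 j1 - b k0 j2 := by
  rw [Lfun]
  rw [Finset.sum_eq_single k0]
  · rw [Function.update_self, Function.update_self]
  · intro k _ hk
    rw [Function.update_of_ne hk, Function.update_of_ne hk, sub_self]
  · intro h
    exact absurd (Finset.mem_univ k0) h

lemma LZ_update (a : ∀ k, Fin (D k) → ℤ) (w : Idx D) (k0 : Fin m) (j1 j2 : Fin (D k0)) :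
    LZ a (Function.update w k0 j1) (Function.update w k0 j2) = a k0 j1 - a k0 j2 := by
  rw [LZ]
  rw [Finset.sum_eq_single k0]
  · rw [Function.update_self, Function.update_self]
  · intro k _ hk
    rw [Function.update_of_ne hk, Function.update_of_ne hk, sub_self]
  · intro h
    exact absurd (Finset.mem_univ k0) h

end PEPS

open PEPS Filter

set_option maxHeartbeats 4000000 in
theorem peps_nonclosed_implies_symmetry
    (m d : ℕ) (hm : 0 < m) (hd : 0 < d) (D : Fin m → ℕ) (hD : ∀ k, 0 < D k)
    (S T : Tensor D d)
    (hclosed : IsClosed (orbit S))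
    (hmem : S ∈ closure (orbit T))
    (hnotmem : S ∉ orbit T) :
    ∃ (h : ∀ k, GL (Fin (D k)) ℂ) (a : ∀ k, Fin (D k) → ℤ),
      (∀ z : ℂ, z ≠ 0 → matAct (oneParam h a z) (oneParam h a z⁻¹) S = S) ∧
      (∃ z : ℂ, z ≠ 0 ∧
        ¬ ∀ k, ∃ c : ℂ, oneParam h a z k = c • (1 : Matrix (Fin (D k)) (Fin (D k)) ℂ)) := by
  classical
  -- a sequence in the orbit of `T` converging to `S`
  obtain ⟨Gs, hGmem, hGlim⟩ := mem_closure_iff_seq_limit.mp hmem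
  choose g hg using hGmem
  -- singular value decomposition of each gauge transformation
  have hsvd : ∀ n k, ∃ (U V : Matrix (Fin (D k)) (Fin (D k)) ℂ) (s : Fin (D k) → ℝ),
      U ∈ Matrix.unitaryGroup (Fin (D k)) ℂ ∧ V ∈ Matrix.unitaryGroup (Fin (D k)) ℂ ∧
      (∀ j, 0 < s j) ∧ (g n k : Matrix (Fin (D k)) (Fin (D k)) ℂ)
        = U * Matrix.diagonal (fun j => (s j : ℂ)) * V := by
    intro n k
    exact svd_of_invertible _ _ (Units.mul_inv (g n k))
  choose 𝒰 𝒱 sv hU hV hspos hdec using hsvd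
  -- normalized logarithms of the singular values
  set c : ℕ → ∀ k, Fin (D k) → ℝ := fun n k j => Real.log (sv n k j) with hcdef
  set ch : ℕ → ∀ k, Fin (D k) → ℝ :=
    fun n k j => c n k j - (∑ j', c n k j') / (D k) with hchdef
  have hchsum : ∀ n k, ∑ j, ch n k j = 0 := by
    intro n k
    rw [hchdef]
    simp only
    rw [Finset.sum_sub_distrib, Finset.sum_const, Finset.card_univ, Fintype.card_fin,
      nsmul_eq_mul, mul_div_cancel₀ _ (by exact_mod_cast (hD k).ne' : ((D k : ℝ)) ≠ 0),
      sub_self]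
  have hLch : ∀ n (x y : Idx D), Lfun (ch n) x y = Lfun (c n) x y := by
    intro n x y
    rw [Lfun, Lfun]
    exact Finset.sum_congr rfl fun k _ => by rw [hchdef]; ring
  -- the ratio formula
  have hratio : ∀ n (x y : Idx D),
      (∏ k, sv n k (x k)) * (∏ k, (sv n k (y k))⁻¹) = Real.exp (Lfun (ch n) x y) := by
    intro n x y
    rw [hLch, Lfun, Real.exp_sum, ← Finset.prod_mul_distrib]
    refine Finset.prod_congr rfl fun k _ => ?_
    rw [Real.exp_sub, Real.exp_log (hspos n k (x k)), Real.exp_log (hspos n k (y k)),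
      div_eq_mul_inv]
  -- decomposition of the conjugated sequence
  have hdecomp : ∀ n, matAct (fun k => (𝒰 n k)ᴴ) (𝒰 n) (Gs n)
      = matAct (fun k => Matrix.diagonal fun j => ((sv n k j : ℝ) : ℂ))
          (fun k => Matrix.diagonal fun j => (((sv n k j)⁻¹ : ℝ) : ℂ))
          (matAct (𝒱 n) (fun k => (𝒱 n k)ᴴ) T) := by
    intro n
    rw [hg n, gact_eq_matAct, matAct_matAct, matAct_matAct]
    have hdd : ∀ k, Matrix.diagonal (fun j => ((sv n k j : ℝ) : ℂ)) *
        Matrix.diagonal (fun j => (((sv n k j)⁻¹ : ℝ) : ℂ)) = 1 := by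
      intro k
      rw [Matrix.diagonal_mul_diagonal]
      have e : (fun j => ((sv n k j : ℝ) : ℂ) * (((sv n k j)⁻¹ : ℝ) : ℂ))
          = fun _ : Fin (D k) => (1 : ℂ) := by
        funext j
        rw [← Complex.ofReal_mul, mul_inv_cancel₀ (hspos n k j).ne']
        norm_num
      rw [e, Matrix.diagonal_one]
    have e1 : (fun k => (𝒰 n k)ᴴ * (g n k : Matrix (Fin (D k)) (Fin (D k)) ℂ))
        = fun k => Matrix.diagonal (fun j => ((sv n k j : ℝ) : ℂ)) * 𝒱 n k := by
      funext k
      rw [hdec n k]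
      have e : (𝒰 n k)ᴴ * (𝒰 n k * Matrix.diagonal (fun j => ((sv n k j : ℝ) : ℂ)) * 𝒱 n k)
          = ((𝒰 n k)ᴴ * 𝒰 n k) * (Matrix.diagonal (fun j => ((sv n k j : ℝ) : ℂ)) * 𝒱 n k) := by
        noncomm_ring
      rw [e, star_mul_unitary (hU n k), one_mul]
    have e2 : (fun k => ((g n k)⁻¹ : GL (Fin (D k)) ℂ) * 𝒰 n k :
          ∀ k, Matrix (Fin (D k)) (Fin (D k)) ℂ)
        = fun k => (𝒱 n k)ᴴ * Matrix.diagonal (fun j => (((sv n k j)⁻¹ : ℝ) : ℂ)) := by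
      funext k
      have hC : (g n k : Matrix (Fin (D k)) (Fin (D k)) ℂ) *
          ((𝒱 n k)ᴴ * Matrix.diagonal (fun j => (((sv n k j)⁻¹ : ℝ) : ℂ)) * (𝒰 n k)ᴴ) = 1 := by
        rw [hdec n k]
        have e : 𝒰 n k * Matrix.diagonal (fun j => ((sv n k j : ℝ) : ℂ)) * 𝒱 n k *
            ((𝒱 n k)ᴴ * Matrix.diagonal (fun j => (((sv n k j)⁻¹ : ℝ) : ℂ)) * (𝒰 n k)ᴴ)
            = 𝒰 n k * (Matrix.diagonal (fun j => ((sv n k j : ℝ) : ℂ)) * (𝒱 n k * (𝒱 n k)ᴴ) *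
              Matrix.diagonal (fun j => (((sv n k j)⁻¹ : ℝ) : ℂ))) * (𝒰 n k)ᴴ := by
          noncomm_ring
        rw [e, unitary_mul_star (hV n k), mul_one, hdd k, mul_one, unitary_mul_star (hU n k)]
      have hB : (((g n k)⁻¹ : GL (Fin (D k)) ℂ) : Matrix (Fin (D k)) (Fin (D k)) ℂ)
          = (𝒱 n k)ᴴ * Matrix.diagonal (fun j => (((sv n k j)⁻¹ : ℝ) : ℂ)) * (𝒰 n k)ᴴ := by
        calc (((g n k)⁻¹ : GL (Fin (D k)) ℂ) : Matrix (Fin (D k)) (Fin (D k)) ℂ)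
            = (((g n k)⁻¹ : GL (Fin (D k)) ℂ) : Matrix (Fin (D k)) (Fin (D k)) ℂ) *
              ((g n k : Matrix (Fin (D k)) (Fin (D k)) ℂ) *
                ((𝒱 n k)ᴴ * Matrix.diagonal (fun j => (((sv n k j)⁻¹ : ℝ) : ℂ)) * (𝒰 n k)ᴴ)) := by
              rw [hC, mul_one]
          _ = ((((g n k)⁻¹ : GL (Fin (D k)) ℂ) : Matrix (Fin (D k)) (Fin (D k)) ℂ) *
                (g n k : Matrix (Fin (D k)) (Fin (D k)) ℂ)) *
              ((𝒱 n k)ᴴ * Matrix.diagonal (fun j => (((sv n k j)⁻¹ : ℝ) : ℂ)) * (𝒰 n k)ᴴ) := by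
              noncomm_ring
          _ = (𝒱 n k)ᴴ * Matrix.diagonal (fun j => (((sv n k j)⁻¹ : ℝ) : ℂ)) * (𝒰 n k)ᴴ := by
              rw [Units.inv_mul, one_mul]
      rw [hB]
      have e : (𝒱 n k)ᴴ * Matrix.diagonal (fun j => (((sv n k j)⁻¹ : ℝ) : ℂ)) * (𝒰 n k)ᴴ * 𝒰 n k
          = (𝒱 n k)ᴴ * Matrix.diagonal (fun j => (((sv n k j)⁻¹ : ℝ) : ℂ)) * ((𝒰 n k)ᴴ * 𝒰 n k) := by
        noncomm_ring
      rw [e, star_mul_unitary (hU n k), mul_one]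
    rw [e1, e2, ← matAct_matAct]
  -- extract convergent subsequences of the unitary parts
  obtain ⟨Ui, hUimem, φ₁, hφ₁, hUlim⟩ :=
    isCompact_USet.tendsto_subseq (x := 𝒰) (fun n => (fun k => hU n k))
  obtain ⟨Vi, hVimem, φ₂, hφ₂, hVlim⟩ :=
    isCompact_USet.tendsto_subseq (x := fun n => 𝒱 (φ₁ n)) (fun n => (fun k => hV (φ₁ n) k))
  set θ : ℕ → ℕ := φ₁ ∘ φ₂ with hθdef
  have hθ : StrictMono θ := hφ₁.comp hφ₂
  have hUθ : Tendsto (fun n => 𝒰 (θ n)) atTop (nhds Ui) := by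
    have := hUlim.comp hφ₂.tendsto_atTop
    exact this
  have hVθ : Tendsto (fun n => 𝒱 (θ n)) atTop (nhds Vi) := hVlim
  have hGθ : Tendsto (fun n => Gs (θ n)) atTop (nhds S) := hGlim.comp hθ.tendsto_atTop
  -- limits
  set S' : Tensor D d := matAct (fun k => (Ui k)ᴴ) Ui S with hS'def
  set T' : Tensor D d := matAct Vi (fun k => (Vi k)ᴴ) T with hT'def
  set Q : ℕ → Tensor D d := fun n => matAct (𝒱 n) (fun k => (𝒱 n k)ᴴ) T with hQdef
  have hS'lim : Tendsto (fun n => matAct (fun k => (𝒰 (θ n) k)ᴴ) (𝒰 (θ n)) (Gs (θ n)))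
      atTop (nhds S') := tendsto_matAct (tendsto_star_mtuple hUθ) hUθ hGθ
  have hQθ : Tendsto (fun n => Q (θ n)) atTop (nhds T') :=
    tendsto_matAct hVθ (tendsto_star_mtuple hVθ) tendsto_const_nhds
  -- key entrywise convergence
  have hkey : ∀ i (x y : Idx D),
      Tendsto (fun n => (Real.exp (Lfun (ch (θ n)) x y) : ℂ) * Q (θ n) i x y)
        atTop (nhds (S' i x y)) := by
    intro i x y
    have h0 := (tendsto_tensor_iff.mp hS'lim) i x y
    refine h0.congr fun n => ?_
    rw [hdecomp (θ n)]
    rw [matAct_diagonal_apply]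
    have e1 : (∏ k, ((sv (θ n) k (x k) : ℝ) : ℂ)) = ((∏ k, sv (θ n) k (x k) : ℝ) : ℂ) := by
      push_cast
      rfl
    have e2 : (∏ k, (((sv (θ n) k (y k))⁻¹ : ℝ) : ℂ)) =
        ((∏ k, (sv (θ n) k (y k))⁻¹ : ℝ) : ℂ) := by
      push_cast
      rfl
    rw [e1, e2]
    rw [show ((∏ k, sv (θ n) k (x k) : ℝ) : ℂ) * Q (θ n) i x y *
          ((∏ k, (sv (θ n) k (y k))⁻¹ : ℝ) : ℂ)
        = (((∏ k, sv (θ n) k (x k)) * (∏ k, (sv (θ n) k (y k))⁻¹) : ℝ) : ℂ) * Q (θ n) i x y by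
      push_cast
      ring]
    rw [hratio (θ n) x y]
  -- dichotomy: bounded or unbounded normalized log singular values
  by_cases hbd : ∃ C : ℝ, ∃ᶠ n in atTop,
      ch (θ n) ∈ (Set.pi Set.univ (fun k => Set.pi Set.univ
        fun _ : Fin (D k) => Set.Icc (-C) C) : Set (∀ k, Fin (D k) → ℝ))
  · -- bounded case: S would lie in the orbit of T, contradiction
    exfalso
    obtain ⟨C, hC⟩ := hbd
    have hcomp : IsCompact (Set.pi Set.univ (fun k => Set.pi Set.univ
        fun _ : Fin (D k) => Set.Icc (-C) C) : Set (∀ k, Fin (D k) → ℝ)) :=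
      isCompact_univ_pi fun k => isCompact_univ_pi fun _ => isCompact_Icc
    obtain ⟨ci, _, ψ, hψ, hclim⟩ := hcomp.tendsto_subseq' hC
    have hSeq : S' = matAct (fun k => Matrix.diagonal fun j => (Real.exp (ci k j) : ℂ))
        (fun k => Matrix.diagonal fun j => (Real.exp (- ci k j) : ℂ)) T' := by
      funext i
      ext x y
      have h1 := (hkey i x y).comp hψ.tendsto_atTop
      have h2 : Tendsto (fun n => (Real.exp (Lfun (ch (θ (ψ n))) x y) : ℂ) * Q (θ (ψ n)) i x y)
          atTop (nhds ((Real.exp (Lfun ci x y) : ℂ) * T' i x y)) := by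
        apply Tendsto.mul
        · have h3 : Tendsto (fun n => Lfun (ch (θ (ψ n))) x y) atTop (nhds (Lfun ci x y)) :=
            tendsto_Lfun hclim x y
          have h5 := (Real.continuous_exp.tendsto _).comp h3
          exact (Complex.continuous_ofReal.tendsto _).comp h5
        · exact ((tendsto_tensor_iff.mp hQθ) i x y).comp hψ.tendsto_atTop
      have heq := tendsto_nhds_unique h1 h2
      show S' i x y = _
      rw [heq, matAct_diagonal_apply]
      have hs : Real.exp (Lfun ci x y)
          = (∏ k, Real.exp (ci k (x k))) * (∏ k, Real.exp (- ci k (y k))) := by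
        rw [← Real.exp_sum, ← Real.exp_sum, ← Real.exp_add, Lfun, ← Finset.sum_add_distrib]
        first
        | rfl
        | (congr 1
           exact Finset.sum_congr rfl fun k _ => by ring)
      rw [show (∏ k, (Real.exp (ci k (x k)) : ℂ))
            = ((∏ k, Real.exp (ci k (x k)) : ℝ) : ℂ) by push_cast; rfl]
      rw [show (∏ k, (Real.exp (- ci k (y k)) : ℂ))
            = ((∏ k, Real.exp (- ci k (y k)) : ℝ) : ℂ) by push_cast; rfl]
      rw [hs]
      push_cast
      ring
    have hT'orb : T' ∈ orbit T :=
      matAct_mem_orbit ⟨fun k => unitary_mul_star (hVimem k),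
        fun k => star_mul_unitary (hVimem k)⟩ (self_mem_orbit T)
    have hS'orb : S' ∈ orbit T := by
      rw [hSeq]
      refine matAct_mem_orbit ⟨fun k => ?_, fun k => ?_⟩ hT'orb
      · rw [Matrix.diagonal_mul_diagonal]
        rw [show (fun j => (Real.exp (ci k j) : ℂ) * (Real.exp (- ci k j) : ℂ))
            = fun _ : Fin (D k) => (1 : ℂ) from funext fun j => by
          rw [← Complex.ofReal_mul, ← Real.exp_add, add_neg_cancel, Real.exp_zero]
          norm_num]
        rw [Matrix.diagonal_one]
      · rw [Matrix.diagonal_mul_diagonal]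
        rw [show (fun j => (Real.exp (- ci k j) : ℂ) * (Real.exp (ci k j) : ℂ))
            = fun _ : Fin (D k) => (1 : ℂ) from funext fun j => by
          rw [← Complex.ofReal_mul, ← Real.exp_add, neg_add_cancel, Real.exp_zero]
          norm_num]
        rw [Matrix.diagonal_one]
    have hSorb : S ∈ orbit T := by
      have hcan : matAct Ui (fun k => (Ui k)ᴴ) S' = S := by
        rw [hS'def]
        exact matAct_cancel ⟨fun k => star_mul_unitary (hUimem k),
          fun k => unitary_mul_star (hUimem k)⟩ S
      rw [← hcan]
      exact matAct_mem_orbit ⟨fun k => unitary_mul_star (hUimem k),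
        fun k => star_mul_unitary (hUimem k)⟩ hS'orb
    exact hnotmem hSorb
  · -- unbounded case
    set r : ℕ → ℝ := fun n => ∑ k, ∑ j, |ch (θ n) k j| with hrdef
    have habs_le : ∀ n k j, |ch (θ n) k j| ≤ r n := by
      intro n k j
      rw [hrdef]
      calc |ch (θ n) k j| ≤ ∑ j', |ch (θ n) k j'| :=
            Finset.single_le_sum (f := fun j' => |ch (θ n) k j'|)
              (fun _ _ => abs_nonneg _) (Finset.mem_univ j)
        _ ≤ ∑ k', ∑ j', |ch (θ n) k' j'| :=
            Finset.single_le_sum (f := fun k' => ∑ j', |ch (θ n) k' j'|)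
              (fun _ _ => Finset.sum_nonneg fun _ _ => abs_nonneg _) (Finset.mem_univ k)
    have hrinf : Tendsto r atTop atTop := by
      rw [tendsto_atTop]
      intro C
      filter_upwards [Filter.not_frequently.mp (not_exists.mp hbd C)] with n hn
      by_contra hcon
      push_neg at hcon
      apply hn
      intro k _
      intro j _
      exact Set.mem_Icc.mpr (abs_le.mp ((habs_le n k j).trans hcon.le))
    have hrpos : ∀ᶠ n in atTop, 0 < r n := hrinf.eventually_gt_atTop 0
    set bs : ℕ → ∀ k, Fin (D k) → ℝ := fun n k j => ch (θ n) k j / r n with hbsdef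
    have hbsmem : ∃ᶠ n in atTop, bs n ∈ (Set.pi Set.univ (fun k => Set.pi Set.univ
        fun _ : Fin (D k) => Set.Icc (-(1:ℝ)) 1) : Set (∀ k, Fin (D k) → ℝ)) := by
      refine Filter.Eventually.frequently ?_
      filter_upwards [hrpos] with n hn
      intro k _
      intro j _
      refine Set.mem_Icc.mpr (abs_le.mp ?_)
      rw [hbsdef]
      simp only
      rw [abs_div, abs_of_pos hn, div_le_one hn]
      exact habs_le n k j
    have hcomp1 : IsCompact (Set.pi Set.univ (fun k => Set.pi Set.univ
        fun _ : Fin (D k) => Set.Icc (-(1:ℝ)) 1) : Set (∀ k, Fin (D k) → ℝ)) :=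
      isCompact_univ_pi fun k => isCompact_univ_pi fun _ => isCompact_Icc
    obtain ⟨b, _, ψ, hψ, hblim⟩ := hcomp1.tendsto_subseq' hbsmem
    have hrψ : Tendsto (fun n => r (ψ n)) atTop atTop := hrinf.comp hψ.tendsto_atTop
    have hrψpos : ∀ᶠ n in atTop, 0 < r (ψ n) := hrψ.eventually_gt_atTop 0
    -- per-factor sums of b vanish
    have hbsum0 : ∀ k, ∑ j, b k j = 0 := by
      intro k
      have h1 : Tendsto (fun n => ∑ j, bs (ψ n) k j) atTop (nhds (∑ j, b k j)) :=
        tendsto_finset_sum _ fun j _ => (tendsto_rtuple_iff.mp hblim) k j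
      have h2 : (fun n => ∑ j, bs (ψ n) k j) =ᶠ[atTop] fun _ => (0:ℝ) := by
        refine Filter.Eventually.of_forall fun n => ?_
        rw [hbsdef]
        simp only
        rw [← Finset.sum_div, hchsum (θ (ψ n)) k, zero_div]
      exact tendsto_nhds_unique (h1.congr' h2) tendsto_const_nhds
    -- total mass of b is 1
    have hbabs : ∑ k, ∑ j, |b k j| = 1 := by
      have h1 : Tendsto (fun n => ∑ k, ∑ j, |bs (ψ n) k j|) atTop
          (nhds (∑ k, ∑ j, |b k j|)) :=
        tendsto_finset_sum _ fun k _ => tendsto_finset_sum _ fun j _ =>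
          ((continuous_abs.tendsto _).comp ((tendsto_rtuple_iff.mp hblim) k j))
      have h2 : (fun n => ∑ k, ∑ j, |bs (ψ n) k j|) =ᶠ[atTop] fun _ => (1:ℝ) := by
        filter_upwards [hrψpos] with n hn
        have e : ∀ k (j : Fin (D k)), |bs (ψ n) k j| = |ch (θ (ψ n)) k j| / r (ψ n) := by
          intro k j
          rw [hbsdef]
          simp only
          rw [abs_div, abs_of_pos hn]
        calc ∑ k, ∑ j, |bs (ψ n) k j| = ∑ k, ∑ j, |ch (θ (ψ n)) k j| / r (ψ n) :=
              Finset.sum_congr rfl fun k _ => Finset.sum_congr rfl fun j _ => e k j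
          _ = ∑ k, (∑ j, |ch (θ (ψ n)) k j|) / r (ψ n) :=
              Finset.sum_congr rfl fun k _ => (Finset.sum_div _ _ _).symm
          _ = (∑ k, ∑ j, |ch (θ (ψ n)) k j|) / r (ψ n) := (Finset.sum_div _ _ _).symm
          _ = 1 := div_self hn.ne'
      exact tendsto_nhds_unique (h1.congr' h2) tendsto_const_nhds
    -- entries of S' vanish in strictly negative directions
    have hvan : ∀ (x y : Idx D), Lfun b x y < 0 → ∀ i, S' i x y = 0 := by
      intro x y hneg i
      have h1 := (hkey i x y).comp hψ.tendsto_atTop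
      have hLbs : Tendsto (fun n => Lfun (bs (ψ n)) x y) atTop (nhds (Lfun b x y)) :=
        tendsto_Lfun hblim x y
      have hch_eq : (fun n => r (ψ n) * Lfun (bs (ψ n)) x y)
          =ᶠ[atTop] fun n => Lfun (ch (θ (ψ n))) x y := by
        filter_upwards [hrψpos] with n hn
        rw [Lfun, Lfun, Finset.mul_sum]
        refine Finset.sum_congr rfl fun k _ => ?_
        rw [hbsdef]
        simp only
        field_simp
      have hatBot : Tendsto (fun n => Lfun (ch (θ (ψ n))) x y) atTop atBot :=
        (Tendsto.atTop_mul_neg hneg hrψ hLbs).congr' hch_eq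
      have hexp : Tendsto (fun n => Real.exp (Lfun (ch (θ (ψ n))) x y)) atTop (nhds 0) :=
        Real.tendsto_exp_atBot.comp hatBot
      have hC : Tendsto (fun n => (Real.exp (Lfun (ch (θ (ψ n))) x y) : ℂ)) atTop (nhds 0) := by
        have h0 := (Complex.continuous_ofReal.tendsto (0:ℝ)).comp hexp
        rw [Complex.ofReal_zero] at h0
        exact h0
      have h2 : Tendsto (fun n => (Real.exp (Lfun (ch (θ (ψ n))) x y) : ℂ) * Q (θ (ψ n)) i x y)
          atTop (nhds 0) := by
        have := hC.mul (((tendsto_tensor_iff.mp hQθ) i x y).comp hψ.tendsto_atTop)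
        simpa using this
      exact tendsto_nhds_unique h1 h2
    -- b is nonconstant in some factor
    have hbnc : ∃ k0 : Fin m, ∃ j1 j2 : Fin (D k0), b k0 j1 ≠ b k0 j2 := by
      by_contra hcon
      push_neg at hcon
      have hb0 : ∀ k j, b k j = 0 := by
        intro k j
        have hsum := hbsum0 k
        rw [Finset.sum_congr rfl (fun j' _ => hcon k j' j)] at hsum
        rw [Finset.sum_const, Finset.card_univ, Fintype.card_fin, nsmul_eq_mul] at hsum
        have hDk : ((D k : ℝ)) ≠ 0 := by exact_mod_cast (hD k).ne'
        exact (mul_eq_zero.mp hsum).resolve_left hDk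
      have : (∑ k, ∑ j, |b k j|) = 0 :=
        Finset.sum_eq_zero fun k _ => Finset.sum_eq_zero fun j _ => by rw [hb0, abs_zero]
      rw [hbabs] at this
      norm_num at this
    obtain ⟨k0, j1, j2, hbne⟩ := hbnc
    -- the integer one-parameter subgroup direction
    obtain ⟨a, ha⟩ := rationalize b
    have hasign : ∀ x y : Idx D, LZ a x y < 0 → Lfun b x y < 0 := by
      intro x y hlt
      rcases lt_trichotomy (Lfun b x y) 0 with h | h | h
      · exact h
      · exact absurd ((ha x y).1 h) (by omega)
      · have h2 := (ha y x).2 (by rw [Lfun_neg]; linarith)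
        rw [LZ_neg] at h2
        omega
    -- the limiting degenerate tensor
    set S2 : Tensor D d := fun i => Matrix.of fun x y =>
      if LZ a x y = 0 then S' i x y else 0 with hS2def
    have hS'orbS : S' ∈ orbit S :=
      matAct_mem_orbit ⟨fun k => star_mul_unitary (hUimem k),
        fun k => unitary_mul_star (hUimem k)⟩ (self_mem_orbit S)
    set tseq : ℕ → ℝ := fun n => ((n : ℝ) + 1)⁻¹ with htdef
    have htpos : ∀ n, 0 < tseq n := fun n => by
      rw [htdef]
      simp only
      positivity
    have htne : ∀ n, ((tseq n : ℝ) : ℂ) ≠ 0 := fun n => by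
      exact_mod_cast (htpos n).ne'
    have htle1 : ∀ n, tseq n ≤ 1 := by
      intro n
      rw [htdef]
      simp only
      rw [inv_le_one_iff₀]
      right
      have : (0:ℝ) ≤ (n:ℝ) := Nat.cast_nonneg n
      linarith
    have ht0 : Tendsto tseq atTop (nhds 0) := by
      have h0 : Tendsto (fun n : ℕ => 1 / ((n:ℝ)+1)) atTop (nhds 0) :=
        tendsto_one_div_add_atTop_nhds_zero_nat
      simp only [one_div] at h0
      exact h0
    set lam : ℕ → ∀ k, Matrix (Fin (D k)) (Fin (D k)) ℂ :=
      fun n k => Matrix.diagonal fun j => ((tseq n : ℝ) : ℂ) ^ (a k j) with hlamdef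
    set lam' : ℕ → ∀ k, Matrix (Fin (D k)) (Fin (D k)) ℂ :=
      fun n k => Matrix.diagonal fun j => ((tseq n : ℝ) : ℂ) ^ (-(a k j)) with hlam'def
    have hinv2 : ∀ n, Inv2 (lam n) (lam' n) := by
      intro n
      refine ⟨fun k => ?_, fun k => ?_⟩
      · rw [hlamdef, hlam'def]
        simp only
        rw [Matrix.diagonal_mul_diagonal]
        rw [show (fun j => ((tseq n : ℝ) : ℂ) ^ (a k j) * ((tseq n : ℝ) : ℂ) ^ (-(a k j)))
            = fun _ : Fin (D k) => (1:ℂ) from funext fun j => by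
          rw [← zpow_add₀ (htne n), add_neg_cancel, zpow_zero]]
        rw [Matrix.diagonal_one]
      · rw [hlamdef, hlam'def]
        simp only
        rw [Matrix.diagonal_mul_diagonal]
        rw [show (fun j => ((tseq n : ℝ) : ℂ) ^ (-(a k j)) * ((tseq n : ℝ) : ℂ) ^ (a k j))
            = fun _ : Fin (D k) => (1:ℂ) from funext fun j => by
          rw [← zpow_add₀ (htne n), neg_add_cancel, zpow_zero]]
        rw [Matrix.diagonal_one]
    have hentry : ∀ n i (x y : Idx D), matAct (lam n) (lam' n) S' i x y
        = ((tseq n : ℝ) : ℂ) ^ (LZ a x y) * S' i x y := by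
      intro n i x y
      rw [hlamdef, hlam'def]
      simp only
      rw [matAct_diagonal_apply, zpow_finset_sum _ (htne n), zpow_finset_sum _ (htne n)]
      rw [show (∑ k, -(a k (y k))) = -(∑ k, a k (y k)) from by
        rw [← Finset.sum_neg_distrib]]
      rw [LZ_split, mul_right_comm, ← zpow_add₀ (htne n), sub_eq_add_neg]
    have hWlim : Tendsto (fun n => matAct (lam n) (lam' n) S') atTop (nhds S2) := by
      rw [tendsto_tensor_iff]
      intro i x y
      simp only [hentry]
      rcases lt_trichotomy (LZ a x y) 0 with hlt | heq | hgt
      · have hS'0 : S' i x y = 0 := hvan x y (hasign x y hlt) i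
        have hS2v : S2 i x y = 0 := by
          rw [hS2def]
          simp [Matrix.of_apply, hlt.ne]
        rw [hS2v]
        simp only [hS'0, mul_zero]
        exact tendsto_const_nhds
      · have hS2v : S2 i x y = S' i x y := by
          rw [hS2def]
          simp [Matrix.of_apply, heq]
        rw [hS2v]
        simp only [heq, zpow_zero, one_mul]
        exact tendsto_const_nhds
      · have hS2v : S2 i x y = 0 := by
          rw [hS2def]
          simp [Matrix.of_apply, hgt.ne']
        rw [hS2v]
        have hn0 : Tendsto (fun n => tseq n ^ (LZ a x y).toNat) atTop (nhds 0) := by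
          refine squeeze_zero (fun n => pow_nonneg (htpos n).le _) (fun n => ?_) ht0
          exact pow_le_of_le_one (htpos n).le (htle1 n) (by omega)
        have hcast : ∀ n, ((tseq n : ℝ) : ℂ) ^ (LZ a x y)
            = ((tseq n ^ (LZ a x y).toNat : ℝ) : ℂ) := by
          intro n
          rw [show (LZ a x y) = ((LZ a x y).toNat : ℤ) from (Int.toNat_of_nonneg hgt.le).symm]
          rw [zpow_natCast]
          push_cast
          rfl
        simp only [hcast]
        have h0 := (Complex.continuous_ofReal.tendsto (0:ℝ)).comp hn0
        rw [Complex.ofReal_zero] at h0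
        have hmul := h0.mul (tendsto_const_nhds (x := S' i x y))
        simpa using hmul
    have hS2orb : S2 ∈ orbit S :=
      hclosed.mem_of_tendsto hWlim (Filter.Eventually.of_forall fun n =>
        matAct_mem_orbit (hinv2 n) hS'orbS)
    obtain ⟨g₀, hg₀⟩ := hS2orb
    -- notation for the base change
    set A : ∀ k, Matrix (Fin (D k)) (Fin (D k)) ℂ :=
      fun k => (g₀ k : Matrix (Fin (D k)) (Fin (D k)) ℂ) with hA
    set B : ∀ k, Matrix (Fin (D k)) (Fin (D k)) ℂ :=
      fun k => (((g₀ k)⁻¹ : GL (Fin (D k)) ℂ) : Matrix (Fin (D k)) (Fin (D k)) ℂ) with hB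
    have hone : ∀ (w : ℂ), oneParam (fun k => (g₀ k)⁻¹) a w
        = fun k => B k * Matrix.diagonal (fun j => w ^ (a k j)) * A k := by
      intro w
      funext k
      rw [oneParam, inv_inv]
    have hABone : ∀ k, A k * B k = 1 := fun k => Units.mul_inv (g₀ k)
    have hBAone : ∀ k, B k * A k = 1 := fun k => Units.inv_mul (g₀ k)
    have hKAB : kron A * kron B = 1 := by
      rw [kron_mul, show (fun k => A k * B k) = fun k : Fin m =>
        (1 : Matrix (Fin (D k)) (Fin (D k)) ℂ) from funext hABone, kron_one]
    have hKBA : kron B * kron A = 1 := by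
      rw [kron_mul, show (fun k => B k * A k) = fun k : Fin m =>
        (1 : Matrix (Fin (D k)) (Fin (D k)) ℂ) from funext hBAone, kron_one]
    have hSS2 : ∀ i, S2 i = kron A * S i * kron B := by
      intro i
      rw [hg₀]
      rfl
    refine ⟨fun k => (g₀ k)⁻¹, a, ?_, ?_⟩
    · intro z hz
      have hinvS2 : ∀ i, kron (fun k => Matrix.diagonal fun j => z ^ (a k j)) * S2 i *
          kron (fun k => Matrix.diagonal fun j => (z⁻¹) ^ (a k j)) = S2 i := by
        intro i
        rw [kron_diagonal, kron_diagonal]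
        ext x y
        rw [Matrix.mul_diagonal, Matrix.diagonal_mul]
        by_cases h0 : LZ a x y = 0
        · rw [zpow_finset_sum _ hz, zpow_finset_sum _ (inv_ne_zero hz), _root_.inv_zpow,
            ← _root_.zpow_neg]
          have hsum : (∑ k, a k (x k)) + -(∑ k, a k (y k)) = 0 := by
            rw [← sub_eq_add_neg, ← LZ_split, h0]
          rw [mul_right_comm, ← zpow_add₀ hz, hsum, zpow_zero, one_mul]
        · have hS2e : S2 i x y = 0 := by
            rw [hS2def]
            simp [Matrix.of_apply, h0]
          rw [hS2e, mul_zero, zero_mul]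
      funext i
      show kron (oneParam (fun k => (g₀ k)⁻¹) a z) * S i *
        kron (oneParam (fun k => (g₀ k)⁻¹) a z⁻¹) = S i
      rw [hone z, hone z⁻¹]
      rw [show (fun k => B k * Matrix.diagonal (fun j => z ^ (a k j)) * A k)
          = fun k => (B k * Matrix.diagonal (fun j => z ^ (a k j))) * A k from rfl]
      rw [show (fun k => B k * Matrix.diagonal (fun j => (z⁻¹) ^ (a k j)) * A k)
          = fun k => (B k * Matrix.diagonal (fun j => (z⁻¹) ^ (a k j))) * A k from rfl]
      rw [← kron_mul, ← kron_mul, ← kron_mul, ← kron_mul]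
      set KZ := kron (fun k => Matrix.diagonal fun j => z ^ (a k j)) with hKZ
      set KZ' := kron (fun k => Matrix.diagonal fun j => (z⁻¹) ^ (a k j)) with hKZ'
      calc (kron B * KZ * kron A) * S i * (kron B * KZ' * kron A)
          = kron B * (KZ * (kron A * S i * kron B) * KZ') * kron A := by noncomm_ring
        _ = kron B * (KZ * S2 i * KZ') * kron A := by rw [← hSS2 i]
        _ = kron B * S2 i * kron A := by rw [hinvS2 i]
        _ = kron B * (kron A * S i * kron B) * kron A := by rw [← hSS2 i]
        _ = (kron B * kron A) * S i * (kron B * kron A) := by noncomm_ring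
        _ = S i := by rw [hKBA, one_mul, mul_one]
    · refine ⟨2, two_ne_zero, ?_⟩
      intro hall
      obtain ⟨cc, hcc⟩ := hall k0
      set w : Idx D := fun k => ⟨0, hD k⟩ with hw
      have hLb : Lfun b (Function.update w k0 j1) (Function.update w k0 j2)
          = b k0 j1 - b k0 j2 := Lfun_update b w k0 j1 j2
      have hLZ : LZ a (Function.update w k0 j1) (Function.update w k0 j2)
          = a k0 j1 - a k0 j2 := LZ_update a w k0 j1 j2
      have hane : a k0 j1 ≠ a k0 j2 := by
        intro hEq
        have hz0 : LZ a (Function.update w k0 j1) (Function.update w k0 j2) = 0 := by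
          rw [hLZ, hEq, sub_self]
        rcases lt_trichotomy (Lfun b (Function.update w k0 j1) (Function.update w k0 j2)) 0
          with h | h | h
        · have := (ha _ _).2 h
          omega
        · apply hbne
          rw [hLb] at h
          linarith
        · have h2 := (ha (Function.update w k0 j2) (Function.update w k0 j1)).2
            (by rw [Lfun_neg]; linarith)
          rw [LZ_neg, hz0] at h2
          omega
      have hcc' : B k0 * Matrix.diagonal (fun j => (2:ℂ) ^ (a k0 j)) * A k0
          = cc • (1 : Matrix (Fin (D k0)) (Fin (D k0)) ℂ) := by
        have e := congrFun (hone 2) k0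
        rw [← e]
        exact hcc
      have hdiag : Matrix.diagonal (fun j => (2:ℂ) ^ (a k0 j))
          = cc • (1 : Matrix (Fin (D k0)) (Fin (D k0)) ℂ) := by
        have h1 : A k0 * (B k0 * Matrix.diagonal (fun j => (2:ℂ) ^ (a k0 j)) * A k0) * B k0
            = (A k0 * B k0) * Matrix.diagonal (fun j => (2:ℂ) ^ (a k0 j)) * (A k0 * B k0) := by
          noncomm_ring
        rw [hcc'] at h1
        rw [hABone k0, one_mul, mul_one] at h1
        rw [← h1]
        rw [Matrix.mul_smul, Matrix.smul_mul, mul_one, hABone k0]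
      have h1 : (2:ℂ) ^ (a k0 j1) = cc := by
        have := congrFun (congrFun hdiag j1) j1
        rw [Matrix.diagonal_apply_eq] at this
        simpa [Matrix.smul_apply, Matrix.one_apply_eq] using this
      have h2 : (2:ℂ) ^ (a k0 j2) = cc := by
        have := congrFun (congrFun hdiag j2) j2
        rw [Matrix.diagonal_apply_eq] at this
        simpa [Matrix.smul_apply, Matrix.one_apply_eq] using this
      have hzeq : (2:ℂ) ^ (a k0 j1) = (2:ℂ) ^ (a k0 j2) := by rw [h1, h2]
      have hn : ((2:ℝ)) ^ (a k0 j1) = ((2:ℝ)) ^ (a k0 j2) := by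
        have := congrArg (fun u : ℂ => ‖u‖) hzeq
        simpa [norm_zpow] using this
      exact hane (zpow_right_injective₀ (by norm_num) (by norm_num) hn)
end
end

section
/- Let T be a PEPS tensor (spatial dimension m, bond dimensions D₁,…,D_m, physical dimension d) that is injective, i.e. the d × (D₁⋯D_m)² matrix whose (i,(a,b)) entry is (T^(i))_{ab} has rank (D₁⋯D_m)² (equivalently: if a matrix X satisfies ∑_{a,b} X_{ab} (T^(i))_{ab} = 0 for all i, then X = 0). Then: (a) the orbit G·T is a closed subset of the space of tensors; and (b) every one-parameter subgroup fixing T is trivial: if h_k ∈ GL(D_k,ℂ) and a_k ∈ ℤ^{D_k} are such that φ(z) := (h₁ diag(z^{a₁(1)},…,z^{a₁(D₁)}) h₁^{-1}, …, h_m diag(z^{a_m(1)},…,z^{a_m(D_m)}) h_m^{-1}) satisfies φ(z)·T = T for all z ∈ ℂ\{0}, then each φ(z) is a tuple of scalar multiples of identity matrices. -/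
/-!
STATEMENT 12 (Injective PEPS tensors have closed orbits and trivial
one-parameter stabilizers).

Let `T` be an injective PEPS tensor (injective as a map from the virtual legs to
the physical legs; equivalently, if `∑ a b, X a b * T⁽ⁱ⁾ a b = 0` for all `i`
then `X = 0`).  Then (a) the orbit `G·T` is closed, and (b) every one-parameter
subgroup `φ(z) = (h_k · diag(z^{a_k}) · h_k⁻¹)_k` fixing `T` consists of tuples
of scalar multiples of identity matrices.
-/

open scoped BigOperators
open Matrix

noncomputable section

open PEPS

namespace PEPSAux

variable {m d : ℕ} {D : Fin m → ℕ}

lemma kron_apply (g : ∀ k, Matrix (Fin (D k)) (Fin (D k)) ℂ) (a b : Idx D) :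
    kron g a b = ∏ k, g k (a k) (b k) := rfl

lemma kron_mul (g h : ∀ k, Matrix (Fin (D k)) (Fin (D k)) ℂ) :
    kron (fun k => g k * h k) = kron g * kron h := by
  ext a c
  simp only [kron_apply, Matrix.mul_apply]
  rw [Fintype.prod_sum (f := fun k j => g k (a k) j * h k j (c k))]
  exact Finset.sum_congr rfl fun b _ => Finset.prod_mul_distrib

lemma kron_one : kron (fun k => (1 : Matrix (Fin (D k)) (Fin (D k)) ℂ)) = 1 := by
  ext a b
  show (∏ k, (1 : Matrix (Fin (D k)) (Fin (D k)) ℂ) (a k) (b k))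
      = (1 : Matrix (Idx D) (Idx D) ℂ) a b
  by_cases h : a = b
  · subst h; simp [Matrix.one_apply]
  · obtain ⟨k, hk⟩ := Function.ne_iff.mp h
    rw [Matrix.one_apply_ne h]
    exact Finset.prod_eq_zero (Finset.mem_univ k) (Matrix.one_apply_ne hk)

lemma kron_smul (c : Fin m → ℂ) (g : ∀ k, Matrix (Fin (D k)) (Fin (D k)) ℂ) :
    kron (fun k => c k • g k) = (∏ k, c k) • kron g := by
  ext a b
  simp only [kron_apply, Matrix.smul_apply, smul_eq_mul]
  rw [Finset.prod_mul_distrib]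

lemma kron_diagonal (v : ∀ k, Fin (D k) → ℂ) :
    kron (fun k => Matrix.diagonal (v k))
      = Matrix.diagonal (fun x : Idx D => ∏ k, v k (x k)) := by
  ext a b
  by_cases h : a = b
  · subst h; simp [kron_apply, Matrix.diagonal_apply_eq]
  · obtain ⟨k, hk⟩ := Function.ne_iff.mp h
    rw [Matrix.diagonal_apply_ne _ h]
    exact Finset.prod_eq_zero (Finset.mem_univ k) (Matrix.diagonal_apply_ne _ hk)

lemma kron_ne_zero (g : ∀ k, Matrix (Fin (D k)) (Fin (D k)) ℂ) (hg : ∀ k, g k ≠ 0) :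
    kron g ≠ 0 := by
  have hex : ∀ k, ∃ p : Fin (D k) × Fin (D k), g k p.1 p.2 ≠ 0 := by
    intro k
    by_contra hc
    push_neg at hc
    exact hg k (by ext i j; exact hc (i, j))
  choose p hp using hex
  intro h0
  have h1 : kron g (fun k => (p k).1) (fun k => (p k).2) = 0 := by rw [h0]; rfl
  rw [kron_apply] at h1
  exact Finset.prod_ne_zero_iff.mpr (fun k _ => hp k) h1

lemma kron_continuous :
    Continuous (fun g : ∀ k, Matrix (Fin (D k)) (Fin (D k)) ℂ => kron g) := by
  apply continuous_matrix
  intro a b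
  simp only [kron_apply]
  apply continuous_finset_prod
  intro k _
  exact (continuous_apply (b k)).comp ((continuous_apply (a k)).comp (continuous_apply k))

lemma sum_mul_eq_trace (X M : Matrix (Idx D) (Idx D) ℂ) :
    ∑ a, ∑ b, X a b * M a b = Matrix.trace (X * Mᵀ) := by
  simp [Matrix.trace, Matrix.diag, Matrix.mul_apply]

lemma span_top (T : Tensor D d)
    (hinj : ∀ X : Matrix (Idx D) (Idx D) ℂ,
      (∀ i, ∑ a, ∑ b, X a b * T i a b = 0) → X = 0) :
    Submodule.span ℂ (Set.range T) = ⊤ := by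
  by_contra hne
  obtain ⟨f, hf0, hfker⟩ :=
    Submodule.exists_dual_map_eq_bot_of_lt_top (lt_top_iff_ne_top.mpr hne) inferInstance
  set X : Matrix (Idx D) (Idx D) ℂ :=
    Matrix.of fun a b => f (Matrix.single a b 1) with hX
  have hfM : ∀ M : Matrix (Idx D) (Idx D) ℂ, f M = ∑ a, ∑ b, X a b * M a b := by
    intro M
    conv_lhs => rw [Matrix.matrix_eq_sum_single M]
    rw [map_sum]
    refine Finset.sum_congr rfl fun a _ => ?_
    rw [map_sum]
    refine Finset.sum_congr rfl fun b _ => ?_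
    have h1 : Matrix.single a b (M a b) = (M a b) • Matrix.single a b 1 := by
      rw [Matrix.smul_single, smul_eq_mul, mul_one]
    rw [h1, _root_.map_smul, smul_eq_mul, hX]
    simp [mul_comm]
  have hX0 : X = 0 := by
    apply hinj
    intro i
    rw [← hfM]
    have h2 : f (T i) ∈ (Submodule.span ℂ (Set.range T)).map f :=
      Submodule.mem_map_of_mem (Submodule.subset_span ⟨i, rfl⟩)
    rw [hfker] at h2
    simpa using h2
  apply hf0
  ext M
  rw [hfM, hX0]
  simp

lemma oneparam_triv (hD : ∀ k, 0 < D k) (T : Tensor D d)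
    (hinj : ∀ X : Matrix (Idx D) (Idx D) ℂ,
      (∀ i, ∑ a, ∑ b, X a b * T i a b = 0) → X = 0)
    (h : ∀ k, GL (Fin (D k)) ℂ) (a : ∀ k, Fin (D k) → ℤ)
    (hfix : ∀ z : ℂ, z ≠ 0 → matAct (oneParam h a z) (oneParam h a z⁻¹) T = T)
    (z : ℂ) (hz : z ≠ 0) (k : Fin m) :
    ∃ c : ℂ, oneParam h a z k = c • (1 : Matrix (Fin (D k)) (Fin (D k)) ℂ) := by
  classical
  set H : Matrix (Idx D) (Idx D) ℂ :=
    kron (fun k' => ((h k' : Matrix (Fin (D k')) (Fin (D k')) ℂ))) with hH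
  set H' : Matrix (Idx D) (Idx D) ℂ :=
    kron (fun k' => (((h k')⁻¹ : GL (Fin (D k')) ℂ) : Matrix (Fin (D k')) (Fin (D k')) ℂ)) with hH'
  have hHH' : H * H' = 1 := by
    rw [hH, hH', ← kron_mul]
    have e : (fun k' => ((h k' : Matrix (Fin (D k')) (Fin (D k')) ℂ)) *
        (((h k')⁻¹ : GL (Fin (D k')) ℂ) : Matrix (Fin (D k')) (Fin (D k')) ℂ))
        = fun k' => (1 : Matrix (Fin (D k')) (Fin (D k')) ℂ) :=
      funext fun k' => Units.mul_inv (h k')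
    rw [e, kron_one]
  have hH'H : H' * H = 1 := by
    rw [hH, hH', ← kron_mul]
    have e : (fun k' => (((h k')⁻¹ : GL (Fin (D k')) ℂ) : Matrix (Fin (D k')) (Fin (D k')) ℂ) *
        ((h k' : Matrix (Fin (D k')) (Fin (D k')) ℂ)))
        = fun k' => (1 : Matrix (Fin (D k')) (Fin (D k')) ℂ) :=
      funext fun k' => Units.inv_mul (h k')
    rw [e, kron_one]
  set T' : Tensor D d := fun i => H' * T i * H with hT'
  -- injectivity transfers to T'
  have hinj' : ∀ X : Matrix (Idx D) (Idx D) ℂ,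
      (∀ i, ∑ p, ∑ q, X p q * T' i p q = 0) → X = 0 := by
    intro X hX
    have hY : (H'ᵀ * X * Hᵀ) = 0 := by
      apply hinj
      intro i
      rw [sum_mul_eq_trace]
      have h1 : (H'ᵀ * X * Hᵀ) * (T i)ᵀ = H'ᵀ * (X * (Hᵀ * (T i)ᵀ)) := by
        simp only [Matrix.mul_assoc]
      rw [h1, Matrix.trace_mul_comm]
      have h2 : (X * (Hᵀ * (T i)ᵀ)) * H'ᵀ = X * (T' i)ᵀ := by
        simp only [hT', Matrix.transpose_mul, Matrix.mul_assoc]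
      rw [h2, ← sum_mul_eq_trace]
      exact hX i
    have hid : Hᵀ * H'ᵀ = 1 := by rw [← Matrix.transpose_mul, hH'H, Matrix.transpose_one]
    calc X = (Hᵀ * H'ᵀ) * X * (Hᵀ * H'ᵀ) := by rw [hid, one_mul, mul_one]
      _ = Hᵀ * (H'ᵀ * X * Hᵀ) * H'ᵀ := by simp only [Matrix.mul_assoc]
      _ = 0 := by rw [hY, Matrix.mul_zero, Matrix.zero_mul]
  -- every entry slot of T' is hit by some i
  have hexentry : ∀ x y : Idx D, ∃ i, T' i x y ≠ 0 := by
    intro x y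
    by_contra hc
    push_neg at hc
    have hX0 := hinj' (Matrix.of fun p q => (if p = x then (1:ℂ) else 0) * (if q = y then 1 else 0)) ?_
    · have h3 := congrFun (congrFun hX0 x) y
      simp at h3
    · intro i
      simp only [Matrix.of_apply, ite_mul, one_mul, zero_mul, mul_ite, mul_zero, mul_one]
      simp only [Finset.sum_ite_eq', Finset.mem_univ, if_true]
      exact hc i
  -- kron of a one-parameter tuple
  have ekron : ∀ w : ℂ, kron (oneParam h a w)
      = H * Matrix.diagonal (fun x : Idx D => ∏ k', w ^ a k' (x k')) * H' := by
    intro w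
    have e : oneParam h a w = fun k' =>
        (((h k' : Matrix (Fin (D k')) (Fin (D k')) ℂ)) *
          Matrix.diagonal (fun j => w ^ a k' j)) *
        (((h k')⁻¹ : GL (Fin (D k')) ℂ) : Matrix (Fin (D k')) (Fin (D k')) ℂ) := rfl
    rw [e, kron_mul, kron_mul, kron_diagonal, hH, hH']
  -- the fixed-point equation, entrywise
  have hkey : ∀ (w : ℂ), w ≠ 0 → ∀ i (x y : Idx D),
      (∏ k', w ^ a k' (x k')) * T' i x y * (∏ k', (w⁻¹) ^ a k' (y k')) = T' i x y := by
    intro w hw i x y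
    have hfw := congrFun (hfix w hw) i
    simp only [matAct] at hfw
    set D1 := Matrix.diagonal (fun x : Idx D => ∏ k', w ^ a k' (x k')) with hD1
    set D2 := Matrix.diagonal (fun x : Idx D => ∏ k', (w⁻¹) ^ a k' (x k')) with hD2
    have e3 : D1 * T' i * D2 = T' i := by
      have e4 : H' * (kron (oneParam h a w) * T i * kron (oneParam h a w⁻¹)) * H
          = D1 * T' i * D2 := by
        rw [ekron w, ekron w⁻¹]
        calc H' * ((H * D1 * H') * T i * (H * D2 * H')) * H
            = (H' * H) * D1 * (H' * T i * H) * D2 * (H' * H) := by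
              simp only [Matrix.mul_assoc]
          _ = D1 * T' i * D2 := by
              rw [hH'H]; simp only [Matrix.one_mul, Matrix.mul_one, hT']
      rw [← e4, hfw]
    have e5 := congrFun (congrFun e3 x) y
    rw [hD1, hD2] at e5
    rw [Matrix.mul_diagonal, Matrix.diagonal_mul] at e5
    exact e5
  -- products are equal at z = 2
  have hprod_ne : ∀ u : Idx D, (∏ k', (2:ℂ) ^ a k' (u k')) ≠ 0 :=
    fun u => Finset.prod_ne_zero_iff.mpr fun k' _ => zpow_ne_zero _ two_ne_zero
  have hdzconst : ∀ x y : Idx D,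
      (∏ k', (2:ℂ) ^ a k' (x k')) = ∏ k', (2:ℂ) ^ a k' (y k') := by
    intro x y
    obtain ⟨i, hi⟩ := hexentry x y
    have hk2 := hkey 2 two_ne_zero i x y
    have hinvprod : (∏ k', ((2:ℂ)⁻¹) ^ a k' (y k')) = (∏ k', (2:ℂ) ^ a k' (y k'))⁻¹ := by
      rw [← Finset.prod_inv_distrib]
      exact Finset.prod_congr rfl fun k' _ => by rw [_root_.inv_zpow]
    rw [hinvprod, mul_right_comm] at hk2
    have h1 : (∏ k', (2:ℂ) ^ a k' (x k')) * (∏ k', (2:ℂ) ^ a k' (y k'))⁻¹ = 1 :=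
      mul_right_cancel₀ hi (by rw [hk2, one_mul])
    exact (mul_inv_eq_one₀ (hprod_ne y)).mp h1
  -- each a k is constant
  have haconst : ∀ j j' : Fin (D k), a k j = a k j' := by
    intro j j'
    set x0 : Idx D := fun k' => ⟨0, hD k'⟩ with hx0
    have hxy := hdzconst (Function.update x0 k j) (Function.update x0 k j')
    rw [← Finset.mul_prod_erase Finset.univ _ (Finset.mem_univ k),
        ← Finset.mul_prod_erase Finset.univ
          (fun k' => (2:ℂ) ^ a k' (Function.update x0 k j' k')) (Finset.mem_univ k)] at hxy
    have herase : ∀ u : Fin (D k),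
        (∏ k' ∈ Finset.univ.erase k, (2:ℂ) ^ a k' (Function.update x0 k u k'))
          = ∏ k' ∈ Finset.univ.erase k, (2:ℂ) ^ a k' (x0 k') := by
      intro u
      refine Finset.prod_congr rfl fun k' hk' => ?_
      rw [Function.update_of_ne (Finset.mem_erase.mp hk').1]
    rw [herase j, herase j', Function.update_self, Function.update_self] at hxy
    have hP : (∏ k' ∈ Finset.univ.erase k, (2:ℂ) ^ a k' (x0 k')) ≠ 0 :=
      Finset.prod_ne_zero_iff.mpr fun k' _ => zpow_ne_zero _ two_ne_zero
    have h2 : (2:ℂ) ^ a k j = (2:ℂ) ^ a k j' := mul_right_cancel₀ hP hxy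
    have habs : (2:ℝ) ^ a k j = (2:ℝ) ^ a k j' := by
      have h3 := congrArg norm h2
      rwa [norm_zpow, norm_zpow, Complex.norm_two] at h3
    exact zpow_right_injective₀ (by norm_num) (by norm_num) habs
  refine ⟨z ^ a k ⟨0, hD k⟩, ?_⟩
  have hdiag : Matrix.diagonal (fun j => z ^ a k j)
      = (z ^ a k ⟨0, hD k⟩) • (1 : Matrix (Fin (D k)) (Fin (D k)) ℂ) := by
    ext i j
    by_cases hij : i = j
    · subst hij
      simp [Matrix.diagonal_apply_eq, Matrix.one_apply_eq]
      rw [haconst i ⟨0, hD k⟩]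
    · simp [Matrix.diagonal_apply_ne _ hij, Matrix.one_apply_ne hij]
  calc oneParam h a z k
      = (h k : Matrix (Fin (D k)) (Fin (D k)) ℂ) * Matrix.diagonal (fun j => z ^ a k j) *
        (((h k)⁻¹ : GL (Fin (D k)) ℂ) : Matrix (Fin (D k)) (Fin (D k)) ℂ) := rfl
    _ = (z ^ a k ⟨0, hD k⟩) • ((h k : Matrix (Fin (D k)) (Fin (D k)) ℂ) * 1 *
        (((h k)⁻¹ : GL (Fin (D k)) ℂ) : Matrix (Fin (D k)) (Fin (D k)) ℂ)) := by
        rw [hdiag, mul_smul_comm, smul_mul_assoc]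
    _ = (z ^ a k ⟨0, hD k⟩) • (1 : Matrix (Fin (D k)) (Fin (D k)) ℂ) := by
        rw [mul_one, Units.mul_inv]

set_option maxHeartbeats 1000000 in
lemma closed_orbit (hD : ∀ k, 0 < D k) (T : Tensor D d)
    (hinj : ∀ X : Matrix (Idx D) (Idx D) ℂ,
      (∀ i, ∑ a, ∑ b, X a b * T i a b = 0) → X = 0) :
    IsClosed (orbit T) := by
  classical
  haveI : FirstCountableTopology (Tensor D d) :=
    inferInstanceAs (FirstCountableTopology (Fin d → Idx D → Idx D → ℂ))
  haveI : T2Space (Matrix (Idx D) (Idx D) ℂ) :=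
    inferInstanceAs (T2Space (Idx D → Idx D → ℂ))
  refine IsSeqClosed.isClosed ?_
  intro u p hu hup
  choose g hg using hu
  -- basic relation on the original gauge matrices
  have hrel : ∀ n i,
      kron (fun k => ((g n k : Matrix (Fin (D k)) (Fin (D k)) ℂ))) * T i
        = u n i * kron (fun k => ((g n k : Matrix (Fin (D k)) (Fin (D k)) ℂ))) := by
    intro n i
    have h1 : u n i = kron (fun k => ((g n k : Matrix (Fin (D k)) (Fin (D k)) ℂ))) * T i *
        kron (fun k => (((g n k)⁻¹ : GL (Fin (D k)) ℂ) : Matrix (Fin (D k)) (Fin (D k)) ℂ)) := by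
      rw [hg n]; rfl
    have h2 : kron (fun k => (((g n k)⁻¹ : GL (Fin (D k)) ℂ) : Matrix (Fin (D k)) (Fin (D k)) ℂ)) *
        kron (fun k => ((g n k : Matrix (Fin (D k)) (Fin (D k)) ℂ))) = 1 := by
      rw [← kron_mul]
      have e : (fun k => (((g n k)⁻¹ : GL (Fin (D k)) ℂ) : Matrix (Fin (D k)) (Fin (D k)) ℂ) *
          ((g n k : Matrix (Fin (D k)) (Fin (D k)) ℂ)))
          = fun k => (1 : Matrix (Fin (D k)) (Fin (D k)) ℂ) :=
        funext fun k => Units.inv_mul (g n k)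
      rw [e, kron_one]
    calc kron (fun k => ((g n k : Matrix (Fin (D k)) (Fin (D k)) ℂ))) * T i
        = kron (fun k => ((g n k : Matrix (Fin (D k)) (Fin (D k)) ℂ))) * T i * 1 := by
          rw [Matrix.mul_one]
      _ = kron (fun k => ((g n k : Matrix (Fin (D k)) (Fin (D k)) ℂ))) * T i *
          (kron (fun k => (((g n k)⁻¹ : GL (Fin (D k)) ℂ) : Matrix (Fin (D k)) (Fin (D k)) ℂ)) *
            kron (fun k => ((g n k : Matrix (Fin (D k)) (Fin (D k)) ℂ)))) := by rw [h2]
      _ = (kron (fun k => ((g n k : Matrix (Fin (D k)) (Fin (D k)) ℂ))) * T i *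
          kron (fun k => (((g n k)⁻¹ : GL (Fin (D k)) ℂ) : Matrix (Fin (D k)) (Fin (D k)) ℂ))) *
            kron (fun k => ((g n k : Matrix (Fin (D k)) (Fin (D k)) ℂ))) := by
          simp only [Matrix.mul_assoc]
      _ = u n i * kron (fun k => ((g n k : Matrix (Fin (D k)) (Fin (D k)) ℂ))) := by rw [← h1]
  -- the normalization set
  set s : ∀ k, Set (Matrix (Fin (D k)) (Fin (D k)) ℂ) :=
    fun k => {B | (∀ i j, ‖B i j‖ ≤ 1) ∧ ∃ i j, B i j = 1} with hs
  -- normalize the gauge matrices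
  have hnorm : ∀ n, ∃ (c : ℂ) (B : ∀ k, Matrix (Fin (D k)) (Fin (D k)) ℂ), c ≠ 0 ∧
      (∀ k, B k ∈ s k) ∧
      kron (fun k => ((g n k : Matrix (Fin (D k)) (Fin (D k)) ℂ))) = c • kron B := by
    intro n
    have hBk : ∀ k, ∃ (ck : ℂ) (Bk : Matrix (Fin (D k)) (Fin (D k)) ℂ), ck ≠ 0 ∧ Bk ∈ s k ∧
        ((g n k : Matrix (Fin (D k)) (Fin (D k)) ℂ)) = ck • Bk := by
      intro k
      haveI : Nonempty (Fin (D k)) := ⟨⟨0, hD k⟩⟩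
      set A : Matrix (Fin (D k)) (Fin (D k)) ℂ := ((g n k : Matrix (Fin (D k)) (Fin (D k)) ℂ))
        with hA
      obtain ⟨pm, -, hpm⟩ := Finset.exists_max_image (Finset.univ : Finset (Fin (D k) × Fin (D k)))
        (fun q => ‖A q.1 q.2‖) Finset.univ_nonempty
      have hA0 : A ≠ 0 := by
        intro h0
        have h1 : (((g n k)⁻¹ : GL (Fin (D k)) ℂ) : Matrix (Fin (D k)) (Fin (D k)) ℂ) * A = 1 :=
          Units.inv_mul (g n k)
        rw [h0, Matrix.mul_zero] at h1
        have h3 := congrFun (congrFun h1 ⟨0, hD k⟩) ⟨0, hD k⟩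
        simp [Matrix.one_apply] at h3
      obtain ⟨q, hq⟩ : ∃ q : Fin (D k) × Fin (D k), A q.1 q.2 ≠ 0 := by
        by_contra hcon; push_neg at hcon
        exact hA0 (by ext i j; exact hcon (i, j))
      have hmax0 : A pm.1 pm.2 ≠ 0 := by
        intro h0
        have h4 := hpm q (Finset.mem_univ q)
        rw [h0] at h4
        simp only [norm_zero] at h4
        exact hq (by
          have := le_antisymm h4 (norm_nonneg _)
          exact norm_eq_zero.mp this)
      have habspos : 0 < ‖A pm.1 pm.2‖ := norm_pos_iff.mpr hmax0
      refine ⟨A pm.1 pm.2, (A pm.1 pm.2)⁻¹ • A, hmax0, ⟨?_, ?_⟩, ?_⟩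
      · intro i j
        show ‖((A pm.1 pm.2)⁻¹ • A) i j‖ ≤ 1
        rw [Matrix.smul_apply, smul_eq_mul, norm_mul, norm_inv, mul_comm, ← div_eq_mul_inv,
          div_le_one habspos]
        exact hpm (i, j) (Finset.mem_univ _)
      · exact ⟨pm.1, pm.2, by
          rw [Matrix.smul_apply, smul_eq_mul, inv_mul_cancel₀ hmax0]⟩
      · rw [smul_smul, mul_inv_cancel₀ hmax0, one_smul]
    choose c B hc hBs hAB using hBk
    refine ⟨∏ k, c k, B, Finset.prod_ne_zero_iff.mpr fun k _ => hc k, hBs, ?_⟩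
    rw [show (fun k => ((g n k : Matrix (Fin (D k)) (Fin (D k)) ℂ))) = fun k => c k • B k
      from funext hAB, kron_smul]
  choose c B hc hBs hkr using hnorm
  -- scaled relation
  have hrel2 : ∀ n i, kron (B n) * T i = u n i * kron (B n) := by
    intro n i
    have h1 := hrel n i
    rw [hkr n, smul_mul_assoc, mul_smul_comm] at h1
    have h2 := congrArg (fun M => (c n)⁻¹ • M) h1
    simpa [smul_smul, inv_mul_cancel₀ (hc n)] using h2
  -- compactness of the normalization set
  have hscompact : ∀ k, IsCompact (s k) := by
    intro k
    have hclosed : IsClosed (s k) := by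
      have h1 : IsClosed {B : Matrix (Fin (D k)) (Fin (D k)) ℂ |
          ∀ i j, ‖B i j‖ ≤ 1} := by
        have e : {B : Matrix (Fin (D k)) (Fin (D k)) ℂ | ∀ i j, ‖B i j‖ ≤ 1}
            = ⋂ i, ⋂ j, {B : Matrix (Fin (D k)) (Fin (D k)) ℂ | ‖B i j‖ ≤ 1} := by
          ext B; simp
        rw [e]
        refine isClosed_iInter fun i => isClosed_iInter fun j => ?_
        have hcont : Continuous fun B : Matrix (Fin (D k)) (Fin (D k)) ℂ =>
            ‖B i j‖ :=
          continuous_norm.comp ((continuous_apply j).comp (continuous_apply i))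
        exact isClosed_le hcont continuous_const
      have h2 : IsClosed {B : Matrix (Fin (D k)) (Fin (D k)) ℂ | ∃ i j, B i j = 1} := by
        have e : {B : Matrix (Fin (D k)) (Fin (D k)) ℂ | ∃ i j, B i j = 1}
            = ⋃ i, ⋃ j, {B : Matrix (Fin (D k)) (Fin (D k)) ℂ | B i j = 1} := by
          ext B; simp
        rw [e]
        refine isClosed_iUnion_of_finite fun i => isClosed_iUnion_of_finite fun j => ?_
        exact isClosed_eq ((continuous_apply j).comp (continuous_apply i)) continuous_const
      exact h1.inter h2
    have hsub : s k ⊆ Set.pi Set.univ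
        (fun _ : Fin (D k) => Set.pi Set.univ
          (fun _ : Fin (D k) => Metric.closedBall (0:ℂ) 1)) := by
      intro Bk hB i _
      intro j _
      have := hB.1 i j
      simpa [Complex.dist_eq] using this
    have hbox : IsCompact (Set.pi Set.univ
        (fun _ : Fin (D k) => Set.pi Set.univ
          (fun _ : Fin (D k) => Metric.closedBall (0:ℂ) 1)) :
            Set (Matrix (Fin (D k)) (Fin (D k)) ℂ)) :=
      isCompact_univ_pi fun _ => isCompact_univ_pi fun _ => isCompact_closedBall 0 1
    exact hbox.of_isClosed_subset hclosed hsub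
  haveI : FirstCountableTopology (∀ k, Matrix (Fin (D k)) (Fin (D k)) ℂ) :=
    inferInstanceAs (FirstCountableTopology (∀ k, Fin (D k) → Fin (D k) → ℂ))
  -- extract a convergent subsequence of the normalized tuples
  obtain ⟨Bl, hBl, φ, hφmono, hφtend⟩ :=
    (isCompact_univ_pi hscompact).tendsto_subseq
      (x := fun n => B n) (fun n => Set.mem_univ_pi.mpr (hBs n))
  -- pass to the limit in the relation
  have hlim : ∀ i, kron Bl * T i = p i * kron Bl := by
    intro i
    have hk : Filter.Tendsto (fun n => kron (B (φ n))) Filter.atTop (nhds (kron Bl)) :=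
      (kron_continuous.tendsto Bl).comp hφtend
    have hmul1 : Filter.Tendsto (fun n => kron (B (φ n)) * T i) Filter.atTop
        (nhds (kron Bl * T i)) := hk.mul tendsto_const_nhds
    have hui : Filter.Tendsto (fun n => u (φ n) i) Filter.atTop (nhds (p i)) := by
      have h1 : Filter.Tendsto (fun n => u (φ n)) Filter.atTop (nhds p) :=
        hup.comp hφmono.tendsto_atTop
      exact ((continuous_apply i).tendsto p).comp h1
    have hmul2 : Filter.Tendsto (fun n => u (φ n) i * kron (B (φ n))) Filter.atTop
        (nhds (p i * kron Bl)) := hui.mul hk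
    have heq : (fun n => kron (B (φ n)) * T i) = fun n => u (φ n) i * kron (B (φ n)) :=
      funext fun n => hrel2 (φ n) i
    exact tendsto_nhds_unique (heq ▸ hmul1) hmul2
  -- the limit is nonzero
  have hBne : ∀ k, Bl k ≠ 0 := by
    intro k h0
    obtain ⟨i, j, hij⟩ := (hBl k (Set.mem_univ k)).2
    rw [h0] at hij
    simpa using hij
  have hLne : kron Bl ≠ 0 := kron_ne_zero Bl hBne
  -- kernel triviality
  have hker : ∀ x : Idx D → ℂ, (kron Bl).mulVec x = 0 → x = 0 := by
    intro x hx
    by_contra hx0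
    obtain ⟨b, hb⟩ := Function.ne_iff.mp hx0
    have hspan := span_top T hinj
    have hstep : ∀ A : Matrix (Idx D) (Idx D) ℂ, (kron Bl).mulVec (A.mulVec x) = 0 := by
      intro A
      have hmem : A ∈ Submodule.span ℂ (Set.range T) := by rw [hspan]; trivial
      induction hmem using Submodule.span_induction with
      | mem M hM =>
        obtain ⟨i, rfl⟩ := hM
        rw [Matrix.mulVec_mulVec, hlim i, ← Matrix.mulVec_mulVec, hx, Matrix.mulVec_zero]
      | zero => rw [Matrix.zero_mulVec, Matrix.mulVec_zero]
      | add M N _ _ hM hN => rw [Matrix.add_mulVec, Matrix.mulVec_add, hM, hN, add_zero]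
      | smul t M _ hM => rw [Matrix.smul_mulVec, Matrix.mulVec_smul, hM, smul_zero]
    have hentry : ∀ a' cc : Idx D, kron Bl cc a' * x b = 0 := by
      intro a' cc
      have h1 := congrFun (hstep (Matrix.single a' b 1)) cc
      have h2 : (Matrix.single a' b (1:ℂ)).mulVec x
          = fun y => if a' = y then x b else 0 := by
        funext y
        simp only [Matrix.mulVec, Matrix.single, Matrix.of_apply, dotProduct, ite_mul,
          one_mul, zero_mul, Finset.sum_ite_eq, Finset.mem_univ, if_true, ite_and]
        by_cases hy : a' = y <;> simp [hy]
      rw [h2] at h1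
      simpa [Matrix.mulVec, dotProduct, mul_ite, Finset.sum_ite_eq, mul_comm] using h1
    have hL0 : kron Bl = 0 := by
      ext cc a'
      rcases mul_eq_zero.mp (hentry a' cc) with hcase | hcase
      · exact hcase
      · exact absurd hcase hb
    exact hLne hL0
  -- each limit factor is invertible
  have hdet : ∀ k, IsUnit (Bl k) := by
    intro k
    rw [Matrix.isUnit_iff_isUnit_det, isUnit_iff_ne_zero]
    intro hdet0
    obtain ⟨v, hv0, hv⟩ := Matrix.exists_mulVec_eq_zero_iff.mpr hdet0
    set x0 : Idx D := fun k' => ⟨0, hD k'⟩ with hx0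
    set x : Idx D → ℂ := fun aa => v (aa k) with hxdef
    have hxz : (kron Bl).mulVec x = 0 := by
      funext aa
      show (∑ bb : Idx D, kron Bl aa bb * x bb) = 0
      set G : ∀ k', Fin (D k') → ℂ :=
        Function.update (fun k' j => Bl k' (aa k') j) k (fun j => Bl k (aa k) j * v j) with hG
      have hGk : G k = fun j => Bl k (aa k) j * v j := by
        rw [hG]; exact Function.update_self _ _ _
      have hGk' : ∀ k', k' ≠ k → G k' = fun j => Bl k' (aa k') j := by
        intro k' hk'
        rw [hG]; exact Function.update_of_ne hk' _ _
      have hterm : ∀ bb : Idx D, kron Bl aa bb * x bb = ∏ k', G k' (bb k') := by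
        intro bb
        rw [kron_apply]
        rw [← Finset.mul_prod_erase Finset.univ (fun k' => Bl k' (aa k') (bb k'))
          (Finset.mem_univ k),
          ← Finset.mul_prod_erase Finset.univ (fun k' => G k' (bb k')) (Finset.mem_univ k)]
        have e1 : ∏ k' ∈ Finset.univ.erase k, G k' (bb k')
            = ∏ k' ∈ Finset.univ.erase k, Bl k' (aa k') (bb k') :=
          Finset.prod_congr rfl fun k' hk' => by
            rw [hGk' k' (Finset.mem_erase.mp hk').1]
        rw [e1, hGk]
        show (Bl k (aa k) (bb k) * ∏ k' ∈ Finset.univ.erase k, Bl k' (aa k') (bb k')) * x bb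
          = (Bl k (aa k) (bb k) * v (bb k)) * ∏ k' ∈ Finset.univ.erase k, Bl k' (aa k') (bb k')
        rw [hxdef]
        ring
      calc (∑ bb : Idx D, kron Bl aa bb * x bb)
          = ∑ bb : Idx D, ∏ k', G k' (bb k') := Finset.sum_congr rfl fun bb _ => hterm bb
        _ = ∏ k', ∑ j, G k' j := (Fintype.prod_sum G).symm
        _ = 0 := by
            apply Finset.prod_eq_zero (Finset.mem_univ k)
            rw [hGk]
            have h5 := congrFun hv (aa k)
            simpa [Matrix.mulVec, dotProduct] using h5
    have hxall := hker x hxz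
    obtain ⟨j, hj⟩ := Function.ne_iff.mp hv0
    have h6 : x (Function.update x0 k j) = 0 := by rw [hxall]; rfl
    rw [hxdef] at h6
    simp only [Function.update_self] at h6
    exact hj h6
  -- assemble the gauge transformation
  refine ⟨fun k => (hdet k).unit, ?_⟩
  funext i
  have hval : (fun k => (((hdet k).unit : GL (Fin (D k)) ℂ) :
      Matrix (Fin (D k)) (Fin (D k)) ℂ)) = Bl := funext fun k => (hdet k).unit_spec
  have hR : kron Bl * kron (fun k => ((((hdet k).unit)⁻¹ : GL (Fin (D k)) ℂ) :
      Matrix (Fin (D k)) (Fin (D k)) ℂ)) = 1 := by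
    rw [← kron_mul]
    have e : (fun k => Bl k * ((((hdet k).unit)⁻¹ : GL (Fin (D k)) ℂ) :
        Matrix (Fin (D k)) (Fin (D k)) ℂ)) = fun k => (1 : Matrix (Fin (D k)) (Fin (D k)) ℂ) := by
      funext k
      exact IsUnit.mul_val_inv (hdet k)
    rw [e, kron_one]
  show p i = gact (fun k => (hdet k).unit) T i
  show p i = kron (fun k => (((hdet k).unit : GL (Fin (D k)) ℂ) :
      Matrix (Fin (D k)) (Fin (D k)) ℂ)) * T i *
    kron (fun k => ((((hdet k).unit)⁻¹ : GL (Fin (D k)) ℂ) :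
      Matrix (Fin (D k)) (Fin (D k)) ℂ))
  rw [hval]
  calc p i = p i * 1 := (Matrix.mul_one _).symm
    _ = p i * (kron Bl * kron (fun k => ((((hdet k).unit)⁻¹ : GL (Fin (D k)) ℂ) :
        Matrix (Fin (D k)) (Fin (D k)) ℂ))) := by rw [hR]
    _ = (p i * kron Bl) * kron (fun k => ((((hdet k).unit)⁻¹ : GL (Fin (D k)) ℂ) :
        Matrix (Fin (D k)) (Fin (D k)) ℂ)) := by rw [Matrix.mul_assoc]
    _ = kron Bl * T i * kron (fun k => ((((hdet k).unit)⁻¹ : GL (Fin (D k)) ℂ) :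
        Matrix (Fin (D k)) (Fin (D k)) ℂ)) := by rw [← hlim i]

end PEPSAux

open PEPSAux

theorem peps_injective_closed_orbit
    (m d : ℕ) (hm : 0 < m) (hd : 0 < d) (D : Fin m → ℕ) (hD : ∀ k, 0 < D k)
    (T : Tensor D d)
    (hinj : ∀ X : Matrix (Idx D) (Idx D) ℂ,
      (∀ i, ∑ a, ∑ b, X a b * T i a b = 0) → X = 0) :
    IsClosed (orbit T) ∧
    (∀ (h : ∀ k, GL (Fin (D k)) ℂ) (a : ∀ k, Fin (D k) → ℤ),
      (∀ z : ℂ, z ≠ 0 → matAct (oneParam h a z) (oneParam h a z⁻¹) T = T) →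
      ∀ z : ℂ, z ≠ 0 →
        ∀ k, ∃ c : ℂ, oneParam h a z k = c • (1 : Matrix (Fin (D k)) (Fin (D k)) ℂ)) :=
  ⟨closed_orbit hD T hinj,
    fun h a hfix z hz k => oneparam_triv hD T hinj h a hfix z hz k⟩
end
end
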